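/- arXiv:math/0703816 — 4 statements merged into one kernel-verified Lean document; each statement's English description precedes it below -/
import Mathlib

section
/- Let c > 0, T > 0, and suppose α is T-periodic, essentially bounded, with α ≪ π²/T² + c²/4 and average of α greater than c²/4. Then every nontrivial solution x of x'' + c x' + α(t)x = 0 satisfies: there exist constants 0 < C₁ ≤ C₂ with C₁ e^{-(c/2)t} ≤ sup_{s∈[t,t+T]}(|x(s)| + |x'(s)|) ≤ C₂ e^{-(c/2)t} for all t ≥ 0; that is, every nonzero solution decays at the exact exponential rate c/2. -/
/-!
Liouville's substitution `y = e^{ct/2} x` turns the equation into Hill's equation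
`y'' + q y = 0` with `q = α - c²/4`, so it suffices to show that every nonzero `y` stays bounded
and bounded away from zero over each period. The Wronskian of `y` and `y (· + T)` is constant,
which yields a recurrence `y (t + 2T) = D y (t + T) - y t`; here `D` is the trace of the
monodromy and the Floquet multipliers are the roots of `ρ² - D ρ + 1`. If `|D| ≥ 2` some nonzero
solution `z` would satisfy `z (t + T) = ρ z t` with `ρ` real: if `z` vanishes somewhere it
vanishes at two points a period apart, which Sturm comparison with `sin (π t / T)` rules out
because `q ≤ π²/T²`, and if it never vanishes the Riccati equation for `z'/z` forces
`∫ q ≤ 0`. Hence `|D| < 2`, so the quadratic form `a² + b² - D a b` is positive definite, and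
its value on `(y t, y (t + T))`, a continuous `T`-periodic function, is bounded above and (by
Sturm again) below by positive constants.
-/

open Real MeasureTheory Set Filter Topology

theorem Continuous.le_of_ae_le {f g : ℝ → ℝ} (hf : Continuous f) (hg : Continuous g)
    (h : ∀ᵐ t, f t ≤ g t) (t : ℝ) : f t ≤ g t :=
  (isClosed_le hf hg).closure_subset ((Measure.dense_of_ae h).closure_eq ▸ mem_univ t)

theorem exists_eq_mul_of_mul_sub_mul_eq_zero {a b c d : ℝ} (hab : a ≠ 0 ∨ b ≠ 0)
    (h : a * d - b * c = 0) : ∃ D, c = D * a ∧ d = D * b := by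
  have hpos : 0 < a ^ 2 + b ^ 2 := by
    rcases hab with ha | hb
    · positivity
    · positivity
  refine ⟨(a * c + b * d) / (a ^ 2 + b ^ 2), ?_, ?_⟩
  · field_simp
    linear_combination (-b) * h
  · field_simp
    linear_combination a * h

theorem abs_mul_mul_le_half_mul_sq_add_sq (D a b : ℝ) :
    |D * a * b| ≤ |D| / 2 * (a ^ 2 + b ^ 2) := by
  rw [abs_mul, abs_mul, ← sq_abs a, ← sq_abs b]
  nlinarith [mul_nonneg (abs_nonneg D) (sq_nonneg (|a| - |b|))]

theorem IsPreconnected.forall_pos_or_forall_neg {s : Set ℝ} (hs : IsPreconnected s) {f : ℝ → ℝ}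
    (hf : ContinuousOn f s) (hf0 : ∀ x ∈ s, f x ≠ 0) : (∀ x ∈ s, 0 < f x) ∨ ∀ x ∈ s, f x < 0 := by
  by_contra! h
  obtain ⟨⟨x, hx, hfx⟩, y, hy, hfy⟩ := h
  obtain ⟨z, hz, hfz⟩ := hs.intermediate_value hx hy hf ⟨hfx, hfy⟩
  exact hf0 z hz hfz

theorem exists_first_zero {f : ℝ → ℝ} (hf : Continuous f) {a b : ℝ} (hab : a < b) (hb : f b = 0)
    (ha : ∀ᶠ s in 𝓝[>] a, f s ≠ 0) :
    ∃ c ∈ Ioc a b, f c = 0 ∧ ((∀ s ∈ Ioo a c, 0 < f s) ∨ ∀ s ∈ Ioo a c, f s < 0) := by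
  obtain ⟨u, hau, hu⟩ := mem_nhdsGT_iff_exists_Ioo_subset.1 ha
  set d := min ((a + u) / 2) b
  have had : a < d := lt_min (by linarith [mem_Ioi.1 hau]) hab
  have hZ : IsCompact (Icc d b ∩ f ⁻¹' {0}) :=
    isCompact_Icc.inter_right (isClosed_singleton.preimage hf)
  obtain ⟨c, ⟨⟨hdc, hcb⟩, hc⟩, hleast⟩ := hZ.exists_isLeast ⟨b, ⟨min_le_right _ _, le_rfl⟩, hb⟩
  have hne : ∀ s ∈ Ioo a c, f s ≠ 0 := by
    intro s ⟨has, hsc⟩ hs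
    rcases lt_or_ge s d with hsd | hds
    · exact hu ⟨has, by linarith [min_le_left ((a + u) / 2) b]⟩ hs
    · exact (hleast ⟨⟨hds, by linarith⟩, hs⟩).not_gt hsc
  exact ⟨c, ⟨had.trans_le hdc, hcb⟩, hc,
    isPreconnected_Ioo.forall_pos_or_forall_neg hf.continuousOn hne⟩

theorem HasDerivAt.nonpos_of_pos_left {f : ℝ → ℝ} {f' a b : ℝ} (hf : HasDerivAt f f' b)
    (hab : a < b) (hb : f b = 0) (hpos : ∀ s ∈ Ioo a b, 0 < f s) : f' ≤ 0 := by
  refine le_of_tendsto (hasDerivAt_iff_tendsto_slope_left_right.1 hf).1 ?_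
  filter_upwards [Ioo_mem_nhdsLT hab] with s hs
  rw [slope_def_field, hb, sub_zero]
  exact div_nonpos_of_nonneg_of_nonpos (hpos s hs).le (by linarith [hs.2])

theorem Function.Periodic.ae_of_ae_Ioo {q : ℝ → ℝ} {T : ℝ} (hq : Function.Periodic q T)
    (hT : 0 < T) {p : ℝ → Prop} {a : ℝ} (h : ∀ᵐ t, t ∈ Ioo a (a + T) → p (q t)) :
    ∀ᵐ t, p (q t) := by
  have hIcc : ∀ᵐ t, t ∈ Icc a (a + T) → p (q t) := by
    filter_upwards [h, Ioo_ae_eq_Icc.mem_iff] with t ht hiff hmem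
    exact ht (hiff.2 hmem)
  have hall : ∀ᵐ t, ∀ n : ℤ, t + n • T ∈ Icc a (a + T) → p (q (t + n • T)) :=
    ae_all_iff.2 fun n =>
      (measurePreserving_add_right volume (n • T)).quasiMeasurePreserving.ae hIcc
  filter_upwards [hall] with t ht
  have hmem : t + (-toIcoDiv hT a t) • T ∈ Icc a (a + T) := by
    rw [neg_zsmul, ← sub_eq_add_neg, self_sub_toIcoDiv_zsmul]
    exact Ico_subset_Icc_self (toIcoMod_mem_Ico hT a t)
  simpa only [hq.zsmul _ t] using ht _ hmem

theorem hasDerivAt_exp_mul_mul {f : ℝ → ℝ} {f' : ℝ} (l : ℝ) {t : ℝ} (hf : HasDerivAt f f' t) :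
    HasDerivAt (fun s => exp (l * s) * f s) (exp (l * t) * (l * f t + f')) t := by
  have he : HasDerivAt (fun s => exp (l * s)) (exp (l * t) * l) t := by
    simpa using ((hasDerivAt_id t).const_mul l).exp
  exact (he.mul hf).congr_deriv (by ring)

theorem sin_pi_div_mul_sub_nonneg {T t₀ s : ℝ} (hT : 0 < T) (hs : s ∈ Icc t₀ (t₀ + T)) :
    0 ≤ sin (π / T * (s - t₀)) := by
  refine sin_nonneg_of_nonneg_of_le_pi (by have := hs.1; positivity) ?_
  rw [div_mul_eq_mul_div, div_le_iff₀ hT]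
  nlinarith [pi_pos, hs.2]

theorem sin_pi_div_mul_sub_pos {T t₀ s : ℝ} (hT : 0 < T) (hs : s ∈ Ioo t₀ (t₀ + T)) :
    0 < sin (π / T * (s - t₀)) := by
  refine sin_pos_of_pos_of_lt_pi (by have := hs.1; positivity) ?_
  rw [div_mul_eq_mul_div, div_lt_iff₀ hT]
  nlinarith [pi_pos, hs.2]

structure IsHillSolution (q w : ℝ → ℝ) : Prop where
  contDiff : ContDiff ℝ 2 w
  deriv_deriv : ∀ᵐ t, deriv (deriv w) t = -(q t * w t)

namespace IsHillSolution

variable {q w w₁ w₂ : ℝ → ℝ}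

theorem differentiable (hw : IsHillSolution q w) : Differentiable ℝ w :=
  hw.contDiff.differentiable (by norm_num)

theorem differentiable_deriv (hw : IsHillSolution q w) : Differentiable ℝ (deriv w) :=
  (hw.contDiff.deriv' (n := 1)).differentiable one_ne_zero

theorem continuous_deriv_deriv (hw : IsHillSolution q w) : Continuous (deriv (deriv w)) :=
  (hw.contDiff.deriv' (n := 1)).continuous_deriv le_rfl

theorem add (hw₁ : IsHillSolution q w₁) (hw₂ : IsHillSolution q w₂) :
    IsHillSolution q (fun t => w₁ t + w₂ t) := by
  have hd : deriv (fun t => w₁ t + w₂ t) = fun t => deriv w₁ t + deriv w₂ t :=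
    funext fun t => deriv_fun_add (hw₁.differentiable t) (hw₂.differentiable t)
  refine ⟨hw₁.contDiff.add hw₂.contDiff, ?_⟩
  filter_upwards [hw₁.deriv_deriv, hw₂.deriv_deriv] with t h₁ h₂
  rw [hd, deriv_fun_add (hw₁.differentiable_deriv t) (hw₂.differentiable_deriv t), h₁, h₂]
  ring

theorem const_mul (hw : IsHillSolution q w) (a : ℝ) : IsHillSolution q (fun t => a * w t) := by
  have hd : deriv (fun t => a * w t) = fun t => a * deriv w t :=
    funext fun t => deriv_const_mul a (hw.differentiable t)
  refine ⟨contDiff_const.mul hw.contDiff, ?_⟩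
  filter_upwards [hw.deriv_deriv] with t h
  rw [hd, deriv_const_mul a (hw.differentiable_deriv t), h]
  ring

theorem comp_add_const (hw : IsHillSolution q w) (a : ℝ) :
    IsHillSolution (fun t => q (t + a)) (fun t => w (t + a)) := by
  refine ⟨hw.contDiff.comp (contDiff_id.add contDiff_const), ?_⟩
  filter_upwards [(measurePreserving_add_right volume a).quasiMeasurePreserving.ae
    hw.deriv_deriv] with t h
  have hd : deriv (fun t => w (t + a)) = fun t => deriv w (t + a) :=
    funext (deriv_comp_add_const w a)
  rw [hd, deriv_comp_add_const, h]

theorem comp_add_period {T : ℝ} (hw : IsHillSolution q w) (hq : Function.Periodic q T) :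
    IsHillSolution q (fun t => w (t + T)) := by
  have hqT : (fun t => q (t + T)) = q := funext hq
  simpa only [hqT] using hw.comp_add_const T

theorem comp_neg (hw : IsHillSolution q w) :
    IsHillSolution (fun t => q (-t)) (fun t => w (-t)) := by
  refine ⟨hw.contDiff.comp contDiff_neg, ?_⟩
  filter_upwards [(Measure.measurePreserving_neg volume).quasiMeasurePreserving.ae
    hw.deriv_deriv] with t h
  have hd : deriv (fun t => w (-t)) = fun t => -deriv w (-t) :=
    funext (deriv_comp_neg w)
  rw [hd, deriv.fun_neg, deriv_comp_neg, h]
  ring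

theorem abs_deriv_deriv_le {K : ℝ} (hw : IsHillSolution q w) (hqK : ∀ᵐ t, |q t| ≤ K) (t : ℝ) :
    |deriv (deriv w) t| ≤ K * |w t| := by
  refine hw.continuous_deriv_deriv.abs.le_of_ae_le
    (continuous_const.mul hw.contDiff.continuous.abs) ?_ t
  filter_upwards [hw.deriv_deriv, hqK] with s h hs
  rw [h, abs_neg, abs_mul]
  exact mul_le_mul_of_nonneg_right hs (abs_nonneg _)

variable {K T t₀ t₁ : ℝ}

/-- Gronwall's inequality for the phase-space curve `t ↦ (w t, w' t)`. -/
theorem eq_zero_of_le_of_apply_eq_zero (hw : IsHillSolution q w) (hqK : ∀ᵐ t, |q t| ≤ K)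
    {a : ℝ} (ha : w a = 0) (ha' : deriv w a = 0) {t : ℝ} (hat : a ≤ t) : w t = 0 := by
  set F : ℝ → ℝ × ℝ := fun s => (w s, deriv w s)
  have hF : ∀ s, HasDerivAt F (deriv w s, deriv (deriv w) s) s := fun s =>
    (hw.differentiable s).hasDerivAt.prodMk (hw.differentiable_deriv s).hasDerivAt
  have hbound : ∀ s, ‖(deriv w s, deriv (deriv w) s)‖ ≤ max 1 K * ‖F s‖ + 0 := by
    intro s
    have h1 : |deriv w s| ≤ ‖F s‖ := le_max_right _ _
    have h2 : |w s| ≤ ‖F s‖ := le_max_left _ _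
    have h3 := hw.abs_deriv_deriv_le hqK s
    rw [add_zero, Prod.norm_def, Real.norm_eq_abs, Real.norm_eq_abs, max_le_iff]
    constructor <;> nlinarith [le_max_left 1 K, le_max_right 1 K, abs_nonneg (w s)]
  have := norm_le_gronwallBound_of_norm_deriv_right_le (f := F) (δ := 0) (a := a) (b := t)
    (fun s _ => (hF s).continuousAt.continuousWithinAt) (fun s _ => (hF s).hasDerivWithinAt)
    (by simp [F, ha, ha']) (fun s _ => hbound s) t ⟨hat, le_rfl⟩
  rw [gronwallBound_ε0_δ0] at this
  exact abs_nonpos_iff.1 ((le_max_left _ _).trans this)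

theorem eq_zero_of_apply_eq_zero (hw : IsHillSolution q w) (hqK : ∀ᵐ t, |q t| ≤ K)
    {a : ℝ} (ha : w a = 0) (ha' : deriv w a = 0) : w = 0 := by
  funext t
  rcases le_total a t with hat | hta
  · exact hw.eq_zero_of_le_of_apply_eq_zero hqK ha ha' hat
  · have hqK' : ∀ᵐ t, |q (-t)| ≤ K :=
      (Measure.measurePreserving_neg volume).quasiMeasurePreserving.ae hqK
    simpa using hw.comp_neg.eq_zero_of_le_of_apply_eq_zero hqK' (a := -a)
      (by simpa using ha) (by simp [deriv_comp_neg, ha']) (neg_le_neg hta)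

theorem deriv_ne_zero_of_apply_eq_zero (hw : IsHillSolution q w) (hqK : ∀ᵐ t, |q t| ≤ K)
    (hw0 : w ≠ 0) {a : ℝ} (ha : w a = 0) : deriv w a ≠ 0 :=
  fun ha' => hw0 (hw.eq_zero_of_apply_eq_zero hqK ha ha')

theorem wronskian_eq (hw₁ : IsHillSolution q w₁) (hw₂ : IsHillSolution q w₂) (s t : ℝ) :
    w₁ s * deriv w₂ s - deriv w₁ s * w₂ s = w₁ t * deriv w₂ t - deriv w₁ t * w₂ t := by
  set W := fun t => w₁ t * deriv w₂ t - deriv w₁ t * w₂ t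
  have hW : ∀ t, HasDerivAt W (w₁ t * deriv (deriv w₂) t - deriv (deriv w₁) t * w₂ t) t := by
    intro t
    exact (((hw₁.differentiable t).hasDerivAt.mul (hw₂.differentiable_deriv t).hasDerivAt).sub
      ((hw₁.differentiable_deriv t).hasDerivAt.mul (hw₂.differentiable t).hasDerivAt)).congr_deriv
      (by ring)
  have hae : (fun t => w₁ t * deriv (deriv w₂) t - deriv (deriv w₁) t * w₂ t) =ᵐ[volume]
      fun _ => 0 := by
    filter_upwards [hw₁.deriv_deriv, hw₂.deriv_deriv] with t h₁ h₂
    rw [h₁, h₂]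
    ring
  have hW' := (((hw₁.contDiff.continuous.mul hw₂.continuous_deriv_deriv).sub
    (hw₁.continuous_deriv_deriv.mul hw₂.contDiff.continuous)).ae_eq_iff_eq volume
    continuous_const).1 hae
  exact is_const_of_deriv_eq_zero (fun t => (hW t).differentiableAt)
    (fun t => (hW t).deriv.trans (congrFun hW' t)) s t

/-- The trace recurrence of the monodromy: translation by a period satisfies its characteristic
equation `ρ² - D ρ + 1 = 0`, whose constant term is `1` because the Wronskian is constant. -/
theorem exists_recurrence (hw : IsHillSolution q w) (hqK : ∀ᵐ t, |q t| ≤ K)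
    (hq : Function.Periodic q T) (hw0 : w ≠ 0) :
    ∃ D, ∀ t, w (t + 2 * T) = D * w (t + T) - w t := by
  have hq2 : Function.Periodic q (2 * T) := by simpa using hq.nat_mul 2
  have hwT := hw.comp_add_period hq
  have hW := hw.wronskian_eq hwT T 0
  simp only [deriv_comp_add_const, zero_add, show T + T = 2 * T by ring] at hW
  have hT : w T ≠ 0 ∨ deriv w T ≠ 0 := by
    by_contra! h
    exact hw0 (hw.eq_zero_of_apply_eq_zero hqK h.1 h.2)
  obtain ⟨D, hD, hD'⟩ := exists_eq_mul_of_mul_sub_mul_eq_zero hT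
    (c := w (2 * T) + w 0) (d := deriv w (2 * T) + deriv w 0) (by linear_combination hW)
  refine ⟨D, fun t => ?_⟩
  have hz := (((hw.comp_add_period hq2).add (hwT.const_mul (-D))).add hw).eq_zero_of_apply_eq_zero
    hqK (a := 0) (by simp only [zero_add]; linear_combination hD) ?_
  · have hzt := congrFun hz t
    simp only [Pi.zero_apply] at hzt
    linear_combination hzt
  · have := hw.differentiable
    rw [deriv_fun_add, deriv_fun_add]
    · simp only [deriv_comp_add_const, deriv_const_mul_field', zero_add]
      linear_combination hD'
    all_goals fun_prop

theorem integral_mul_sin_eq (hw : IsHillSolution q w) (κ : ℝ) (h0 : w t₀ = 0) (h1 : w t₁ = 0) :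
    ∫ s in t₀..t₁, (κ ^ 2 * w s + deriv (deriv w) s) * sin (κ * (s - t₀)) =
      deriv w t₁ * sin (κ * (t₁ - t₀)) := by
  have hθ : ∀ s, HasDerivAt (fun s => κ * (s - t₀)) κ s := fun s => by
    simpa using ((hasDerivAt_id s).sub_const t₀).const_mul κ
  have hU : ∀ s, HasDerivAt
      (fun s => deriv w s * sin (κ * (s - t₀)) - w s * (κ * cos (κ * (s - t₀))))
      ((κ ^ 2 * w s + deriv (deriv w) s) * sin (κ * (s - t₀))) s := fun s =>
    (((hw.differentiable_deriv s).hasDerivAt.mul (hθ s).sin).sub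
      ((hw.differentiable s).hasDerivAt.mul ((hθ s).cos.const_mul κ))).congr_deriv (by ring)
  have := hw.contDiff.continuous
  have := hw.continuous_deriv_deriv
  rw [intervalIntegral.integral_eq_sub_of_hasDerivAt (fun s _ => hU s)
    (Continuous.intervalIntegrable (by fun_prop) _ _)]
  simp [h0, h1]

/-- Sturm comparison with `φ = sin (π (t - t₀) / T)`, which solves `φ'' + (π/T)² φ = 0`:
`∫ (π²/T² - q) w φ` over `[t₀, t₁]` is `w'(t₁) φ(t₁) ≤ 0`, although the integrand is `≥ 0`. -/
theorem sturm_of_pos (hw : IsHillSolution q w) (hT : 0 < T)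
    (hub : ∀ᵐ t, q t ≤ π ^ 2 / T ^ 2)
    (hstrict : ¬ ∀ᵐ t, t ∈ Ioo t₀ (t₀ + T) → q t = π ^ 2 / T ^ 2)
    (h01 : t₀ < t₁) (h1T : t₁ ≤ t₀ + T) (h0 : w t₀ = 0) (h1 : w t₁ = 0)
    (hd1 : deriv w t₁ ≠ 0) (hpos : ∀ s ∈ Ioo t₀ t₁, 0 < w s) : False := by
  set κ := π / T
  set φ := fun s => sin (κ * (s - t₀))
  have hφ_nonneg : ∀ s ∈ Icc t₀ (t₀ + T), 0 ≤ φ s := fun s => sin_pi_div_mul_sub_nonneg hT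
  have hφ_pos : ∀ s ∈ Ioo t₀ (t₀ + T), 0 < φ s := fun s => sin_pi_div_mul_sub_pos hT
  have hw_nonneg : ∀ s ∈ Icc t₀ t₁, 0 ≤ w s := by
    rintro s ⟨hs0, hs1⟩
    rcases hs0.eq_or_lt with rfl | hs0
    · rw [h0]
    rcases hs1.eq_or_lt with rfl | hs1
    · rw [h1]
    exact (hpos s ⟨hs0, hs1⟩).le
  set G := fun s => (κ ^ 2 * w s + deriv (deriv w) s) * φ s
  have hG : ∀ᵐ s, G s = (π ^ 2 / T ^ 2 - q s) * (w s * φ s) := by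
    filter_upwards [hw.deriv_deriv] with s h
    simp only [G, h, κ, div_pow]
    ring
  have hG_nonneg : 0 ≤ᵐ[volume.restrict (Icc t₀ t₁)] G := by
    rw [EventuallyLE, ae_restrict_iff' measurableSet_Icc]
    filter_upwards [hG, hub] with s hGs hqs hs
    rw [Pi.zero_apply, hGs]
    exact mul_nonneg (by linarith)
      (mul_nonneg (hw_nonneg s hs) (hφ_nonneg s ⟨hs.1, hs.2.trans h1T⟩))
  have hG_int : IntervalIntegrable G volume t₀ t₁ := by
    have := hw.contDiff.continuous
    have := hw.continuous_deriv_deriv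
    exact Continuous.intervalIntegrable (by simp only [G, φ]; fun_prop) _ _
  have hint := hw.integral_mul_sin_eq κ h0 h1
  have hint0 : ∫ s in t₀..t₁, G s = 0 :=
    le_antisymm (hint ▸ mul_nonpos_of_nonpos_of_nonneg
      ((hw.differentiable t₁).hasDerivAt.nonpos_of_pos_left h01 h1 hpos)
      (hφ_nonneg t₁ ⟨h01.le, h1T⟩))
      (intervalIntegral.integral_nonneg_of_ae_restrict h01.le hG_nonneg)
  obtain rfl : t₁ = t₀ + T :=
    h1T.eq_or_lt.resolve_right fun h => mul_ne_zero hd1 (hφ_pos t₁ ⟨h01, h⟩).ne' (hint ▸ hint0)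
  apply hstrict
  have hG0 := (intervalIntegral.integral_eq_zero_iff_of_le_of_nonneg_ae h01.le
    (ae_mono (Measure.restrict_mono Ioc_subset_Icc_self le_rfl) hG_nonneg) hG_int).1 hint0
  rw [EventuallyEq, ae_restrict_iff' measurableSet_Ioc] at hG0
  filter_upwards [hG0, hG] with s hG0s hGs hs
  have := hGs ▸ hG0s (Ioo_subset_Ioc_self hs)
  rw [Pi.zero_apply, mul_eq_zero] at this
  exact (sub_eq_zero.1 (this.resolve_right (mul_pos (hpos s hs) (hφ_pos s hs)).ne')).symm

theorem eq_zero_of_apply_eq_zero_of_apply_add_eq_zero (hw : IsHillSolution q w)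
    (hqK : ∀ᵐ t, |q t| ≤ K) (hT : 0 < T) (hub : ∀ᵐ t, q t ≤ π ^ 2 / T ^ 2)
    (hstrict : ¬ ∀ᵐ t, t ∈ Ioo t₀ (t₀ + T) → q t = π ^ 2 / T ^ 2)
    (h0 : w t₀ = 0) (hT0 : w (t₀ + T) = 0) : w = 0 := by
  by_contra hw0
  have hnear : ∀ᶠ s in 𝓝[>] t₀, w s ≠ 0 :=
    ((hw.differentiable t₀).hasDerivAt.eventually_ne
      (hw.deriv_ne_zero_of_apply_eq_zero hqK hw0 h0)).filter_mono (nhdsGT_le_nhdsNE t₀)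
  obtain ⟨t₁, ⟨h01, h1T⟩, h1, hpos | hneg⟩ :=
    exists_first_zero hw.contDiff.continuous (by linarith) hT0 hnear
  · exact hw.sturm_of_pos hT hub hstrict h01 h1T h0 h1
      (hw.deriv_ne_zero_of_apply_eq_zero hqK hw0 h1) hpos
  · refine (hw.const_mul (-1)).sturm_of_pos hT hub hstrict h01 h1T (by simp [h0]) (by simp [h1])
      ?_ fun s hs => by simpa using hneg s hs
    simpa [deriv_const_mul_field'] using hw.deriv_ne_zero_of_apply_eq_zero hqK hw0 h1

/-- Riccati argument: `u = w' / w` is periodic and `u' = -q - u²`. -/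
theorem integral_nonpos_of_apply_add_eq_mul {ρ : ℝ}
    (hw : IsHillSolution q w) (hT : 0 ≤ T) (hne : ∀ t, w t ≠ 0)
    (hmul : ∀ t, w (t + T) = ρ * w t) : ∫ t in (0 : ℝ)..T, q t ≤ 0 := by
  set u := fun t => deriv w t / w t
  set u' := fun t => (deriv (deriv w) t * w t - deriv w t * deriv w t) / w t ^ 2
  have hu : ∀ t, HasDerivAt u (u' t) t := fun t =>
    (hw.differentiable_deriv t).hasDerivAt.div (hw.differentiable t).hasDerivAt (hne t)
  have hu_cont : Continuous u := hw.contDiff.continuous_deriv (by norm_num) |>.div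
    hw.contDiff.continuous hne
  have hu'_cont : Continuous u' :=
    ((hw.continuous_deriv_deriv.mul hw.contDiff.continuous).sub
      ((hw.contDiff.continuous_deriv (by norm_num)).mul
        (hw.contDiff.continuous_deriv (by norm_num)))).div
      (hw.contDiff.continuous.pow 2) fun t => pow_ne_zero 2 (hne t)
  have hderiv : deriv w T = ρ * deriv w 0 := by
    have h := congrArg (fun f => deriv f 0) (funext hmul)
    simpa [deriv_comp_add_const, deriv_const_mul_field'] using h
  have hρ : ρ ≠ 0 := by
    rintro rfl
    exact hne T (by simpa using hmul 0)
  have huT : u T = u 0 := by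
    simp only [u, hderiv, show w T = ρ * w 0 by simpa using hmul 0, mul_div_mul_left _ _ hρ]
  have hq : ∫ t in (0 : ℝ)..T, q t = -((∫ t in (0 : ℝ)..T, u' t) + ∫ t in (0 : ℝ)..T, u t ^ 2) := by
    rw [← intervalIntegral.integral_add (g := fun t => u t ^ 2)
      (hu'_cont.intervalIntegrable _ _) ((hu_cont.pow 2).intervalIntegrable _ _),
      ← intervalIntegral.integral_neg]
    refine intervalIntegral.integral_congr_ae ?_
    filter_upwards [hw.deriv_deriv] with t h _
    simp only [u, u', h]
    field_simp [hne t]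
    ring
  rw [hq, intervalIntegral.integral_eq_sub_of_hasDerivAt (fun t _ => hu t)
    (hu'_cont.intervalIntegrable _ _), huT, sub_self, zero_add, neg_nonpos]
  exact intervalIntegral.integral_nonneg hT fun t _ => sq_nonneg _

end IsHillSolution

theorem isHillSolution_exp_mul {x α : ℝ → ℝ} {c : ℝ} (hx : ContDiff ℝ 2 x)
    (hode : ∀ᵐ t, deriv (deriv x) t + c * deriv x t + α t * x t = 0) :
    IsHillSolution (fun t => α t - c ^ 2 / 4) (fun t => exp (c / 2 * t) * x t) := by
  have hx₁ : Differentiable ℝ x := hx.differentiable (by norm_num)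
  have hx₂ : Differentiable ℝ (deriv x) := (hx.deriv' (n := 1)).differentiable one_ne_zero
  have hd : deriv (fun t => exp (c / 2 * t) * x t) =
      fun t => exp (c / 2 * t) * (c / 2 * x t + deriv x t) :=
    funext fun t => (hasDerivAt_exp_mul_mul (c / 2) (hx₁ t).hasDerivAt).deriv
  refine ⟨(contDiff_exp.comp (contDiff_const.mul contDiff_id)).mul hx, ?_⟩
  filter_upwards [hode] with t h
  have hg : HasDerivAt (fun s => c / 2 * x s + deriv x s)
      (c / 2 * deriv x t + deriv (deriv x) t) t :=
    ((hx₁ t).hasDerivAt.const_mul (c / 2)).add (hx₂ t).hasDerivAt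
  rw [hd, (hasDerivAt_exp_mul_mul (c / 2) hg).deriv]
  linear_combination exp (c / 2 * t) * h

structure HillStabilityCondition (q : ℝ → ℝ) (T : ℝ) : Prop where
  pos : 0 < T
  periodic : Function.Periodic q T
  ae_bdd : ∃ K, ∀ᵐ t, |q t| ≤ K
  ae_le : ∀ᵐ t, q t ≤ π ^ 2 / T ^ 2
  not_ae_eq : ¬ ∀ᵐ t, q t = π ^ 2 / T ^ 2
  integral_pos : 0 < ∫ t in (0 : ℝ)..T, q t

namespace HillStabilityCondition

variable {q w : ℝ → ℝ} {T : ℝ}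

theorem eq_zero_of_apply_eq_zero_of_apply_add_eq_zero (hq : HillStabilityCondition q T)
    (hw : IsHillSolution q w) {t₀ : ℝ} (h0 : w t₀ = 0) (hT0 : w (t₀ + T) = 0) : w = 0 := by
  obtain ⟨K, hK⟩ := hq.ae_bdd
  exact hw.eq_zero_of_apply_eq_zero_of_apply_add_eq_zero hK hq.pos hq.ae_le
    (fun h => hq.not_ae_eq (hq.periodic.ae_of_ae_Ioo hq.pos (p := (· = π ^ 2 / T ^ 2)) h)) h0 hT0

theorem eq_zero_of_apply_add_eq_mul (hq : HillStabilityCondition q T) (hw : IsHillSolution q w)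
    {ρ : ℝ} (hmul : ∀ t, w (t + T) = ρ * w t) : w = 0 := by
  by_cases hzero : ∀ t, w t ≠ 0
  · exact absurd (hw.integral_nonpos_of_apply_add_eq_mul hq.pos.le hzero hmul)
      hq.integral_pos.not_ge
  · obtain ⟨t₀, h0⟩ := not_forall_not.1 hzero
    exact hq.eq_zero_of_apply_eq_zero_of_apply_add_eq_zero hw h0 (by rw [hmul, h0, mul_zero])

/-- The Floquet multipliers are the roots of `ρ² - D ρ + 1`; for `|D| ≥ 2` they would be real. -/
theorem abs_lt_two_of_recurrence (hq : HillStabilityCondition q T) (hw : IsHillSolution q w)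
    (hw0 : w ≠ 0) {D : ℝ} (hrec : ∀ t, w (t + 2 * T) = D * w (t + T) - w t) : |D| < 2 := by
  by_contra! hD
  have hdisc : 0 ≤ D ^ 2 - 4 := by nlinarith [sq_abs D, abs_nonneg D]
  set ρ := (D + √(D ^ 2 - 4)) / 2
  set σ := D - ρ
  have hρσ : ρ * σ = 1 := by
    simp only [σ, ρ]
    linear_combination (-1 / 4 : ℝ) * Real.sq_sqrt hdisc
  have hz := hq.eq_zero_of_apply_add_eq_mul ((hw.comp_add_period hq.periodic).add
    (hw.const_mul (-σ))) (ρ := ρ) fun t => by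
      rw [add_assoc, ← two_mul, hrec]
      linear_combination (w t) * hρσ
  refine hw0 (hq.eq_zero_of_apply_add_eq_mul hw (ρ := σ) fun t => ?_)
  have hzt := congrFun hz t
  simp only [Pi.zero_apply] at hzt
  linear_combination hzt

theorem exists_recurrence (hq : HillStabilityCondition q T) (hw : IsHillSolution q w)
    (hw0 : w ≠ 0) : ∃ D, |D| < 2 ∧ ∀ t, w (t + 2 * T) = D * w (t + T) - w t := by
  obtain ⟨K, hK⟩ := hq.ae_bdd
  obtain ⟨D, hD⟩ := hw.exists_recurrence hK hq.periodic hw0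
  exact ⟨D, hq.abs_lt_two_of_recurrence hw hw0 hD, hD⟩

theorem apply_ne_zero_or_apply_add_ne_zero (hq : HillStabilityCondition q T)
    (hw : IsHillSolution q w) (hw0 : w ≠ 0) (t : ℝ) : w t ≠ 0 ∨ w (t + T) ≠ 0 := by
  by_contra! h
  exact hw0 (hq.eq_zero_of_apply_eq_zero_of_apply_add_eq_zero hw h.1 h.2)

theorem of_sub_const {α : ℝ → ℝ} {k : ℝ} (hT : 0 < T) (hk : 0 ≤ k)
    (hper : Function.Periodic α T) (hbdd : ∃ C, ∀ᵐ t, |α t| ≤ C)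
    (hub : ∀ᵐ t, α t ≤ π ^ 2 / T ^ 2 + k)
    (hstrict : 0 < volume {t ∈ Icc (0 : ℝ) T | α t < π ^ 2 / T ^ 2 + k})
    (havg : k < 1 / T * ∫ t in (0 : ℝ)..T, α t) :
    HillStabilityCondition (fun t => α t - k) T where
  pos := hT
  periodic t := by simp only [hper t]
  ae_bdd := by
    obtain ⟨C, hC⟩ := hbdd
    refine ⟨C + k, hC.mono fun t ht => (abs_sub _ _).trans ?_⟩
    rw [abs_of_nonneg hk]
    linarith
  ae_le := hub.mono fun t ht => by linarith
  not_ae_eq h := by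
    refine hstrict.ne' (measure_mono_null ?_ (ae_iff.1 h))
    rintro t ⟨-, ht⟩ (heq : α t - k = _)
    linarith
  integral_pos := by
    -- `α` is integrable, since otherwise its integral would be the junk value `0`.
    have hint : IntervalIntegrable α volume 0 T := by
      by_contra h
      rw [intervalIntegral.integral_undef h, mul_zero] at havg
      linarith
    have := mul_lt_mul_of_pos_left havg hT
    rw [← mul_assoc, mul_one_div_cancel hT.ne', one_mul] at this
    rw [intervalIntegral.integral_sub hint intervalIntegrable_const,
      intervalIntegral.integral_const, smul_eq_mul, sub_zero]
    linarith

end HillStabilityCondition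

section Recurrence

variable {f : ℝ → ℝ} {D T : ℝ}

/-- The quadratic form `a² + b² - D a b` evaluated on `(f t, f (t + T))` is `T`-periodic. -/
theorem isCompact_range_of_recurrence (hf : Continuous f) (hT : T ≠ 0)
    (hrec : ∀ t, f (t + 2 * T) = D * f (t + T) - f t) :
    IsCompact (range fun t => f t ^ 2 + f (t + T) ^ 2 - D * f t * f (t + T)) := by
  refine Function.Periodic.compact_of_continuous (fun t => ?_) hT (by fun_prop)
  simp only [add_assoc, ← two_mul, hrec]
  ring

theorem exists_abs_le_of_recurrence (hf : Continuous f) (hT : T ≠ 0) (hD : |D| < 2)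
    (hrec : ∀ t, f (t + 2 * T) = D * f (t + T) - f t) : ∃ B, ∀ t, |f t| ≤ B := by
  obtain ⟨M, hM⟩ := (isCompact_range_of_recurrence hf hT hrec).bddAbove
  refine ⟨√(M / (1 - |D| / 2)), fun t => Real.abs_le_sqrt ?_⟩
  rw [le_div_iff₀ (by linarith)]
  have hQ := hM ⟨t, rfl⟩
  have hDab := abs_le.1 (abs_mul_mul_le_half_mul_sq_add_sq D (f t) (f (t + T)))
  nlinarith [sq_nonneg (f (t + T))]

theorem exists_pos_le_max_of_recurrence (hf : Continuous f) (hT : T ≠ 0) (hD : |D| < 2)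
    (hrec : ∀ t, f (t + 2 * T) = D * f (t + T) - f t) (hnz : ∀ t, f t ≠ 0 ∨ f (t + T) ≠ 0) :
    ∃ δ > 0, ∀ t, δ ≤ max |f t| |f (t + T)| := by
  obtain ⟨_, ⟨t₀, rfl⟩, hmin⟩ :=
    (isCompact_range_of_recurrence hf hT hrec).exists_isLeast (range_nonempty _)
  set m := f t₀ ^ 2 + f (t₀ + T) ^ 2 - D * f t₀ * f (t₀ + T)
  have hm : 0 < m := by
    have h₀ : 0 < f t₀ ^ 2 + f (t₀ + T) ^ 2 := by
      rcases hnz t₀ with h | h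
      · positivity
      · positivity
    nlinarith [abs_le.1 (abs_mul_mul_le_half_mul_sq_add_sq D (f t₀) (f (t₀ + T)))]
  refine ⟨√m / 2, by positivity, fun t => ?_⟩
  have hQ : m ≤ _ := hmin ⟨t, rfl⟩
  have hDab := abs_le.1 (abs_mul_mul_le_half_mul_sq_add_sq D (f t) (f (t + T)))
  have h₁ := mul_self_le_mul_self (abs_nonneg _) (le_max_left |f t| |f (t + T)|)
  have h₂ := mul_self_le_mul_self (abs_nonneg _) (le_max_right |f t| |f (t + T)|)
  rw [div_le_iff₀ two_pos, Real.sqrt_le_left (by positivity)]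
  nlinarith [sq_abs (f t), sq_abs (f (t + T))]

theorem deriv_recurrence (hf : Differentiable ℝ f)
    (hrec : ∀ t, f (t + 2 * T) = D * f (t + T) - f t) (t : ℝ) :
    deriv f (t + 2 * T) = D * deriv f (t + T) - deriv f t := by
  have h := congrArg (fun g => deriv g t) (funext hrec)
  rwa [deriv_comp_add_const, deriv_fun_sub (by fun_prop) (by fun_prop), deriv_const_mul_field,
    deriv_comp_add_const] at h

end Recurrence

theorem abs_add_abs_deriv_le_exp_neg_mul {x : ℝ → ℝ} (hx : Differentiable ℝ x) {l : ℝ}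
    (hl : 0 ≤ l) (s : ℝ) :
    |x s| + |deriv x s| ≤ exp (-l * s) *
      ((1 + l) * |exp (l * s) * x s| + |deriv (fun t => exp (l * t) * x t) s|) := by
  have hE : exp (-l * s) * exp (l * s) = 1 := by rw [← exp_add]; simp
  set Y := exp (l * s) * x s
  have hxs : x s = exp (-l * s) * Y := by rw [← mul_assoc, hE, one_mul]
  have hx' : deriv x s = exp (-l * s) * (deriv (fun t => exp (l * t) * x t) s - l * Y) := by
    rw [(hasDerivAt_exp_mul_mul l (hx s).hasDerivAt).deriv]
    linear_combination (-deriv x s) * hE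
  clear_value Y
  have hsub := abs_sub (deriv (fun t => exp (l * t) * x t) s) (l * Y)
  rw [abs_mul, abs_of_nonneg hl] at hsub
  rw [hxs, hx', abs_mul, abs_mul, abs_of_pos (exp_pos _), ← mul_add]
  exact mul_le_mul_of_nonneg_left (by linarith) (exp_pos _).le

theorem exp_neg_mul_mul_abs_le_abs_add_abs_deriv (x : ℝ → ℝ) (l s : ℝ) :
    exp (-l * s) * |exp (l * s) * x s| ≤ |x s| + |deriv x s| := by
  rw [abs_mul, abs_of_pos (exp_pos _), ← mul_assoc, ← exp_add, neg_mul, neg_add_cancel, exp_zero,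
    one_mul]
  exact le_add_of_nonneg_right (abs_nonneg _)

theorem exists_sSup_image_Icc_exp_bounds {g : ℝ → ℝ} (hg : Continuous g) {l T C₁ C₂ : ℝ}
    (hl : 0 ≤ l) (hT : 0 ≤ T) (hC₁ : 0 < C₁) (hup : ∀ s, g s ≤ C₂ * exp (-l * s))
    (hlow : ∀ t, ∃ s ∈ Icc t (t + T), C₁ * exp (-l * s) ≤ g s) :
    ∃ C₁ C₂ : ℝ, 0 < C₁ ∧ C₁ ≤ C₂ ∧ ∀ t ≥ (0 : ℝ),
      C₁ * exp (-l * t) ≤ sSup (g '' Icc t (t + T)) ∧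
        sSup (g '' Icc t (t + T)) ≤ C₂ * exp (-l * t) := by
  have hC₂ : 0 ≤ C₂ := by
    obtain ⟨s, -, hs⟩ := hlow 0
    have := (mul_pos hC₁ (exp_pos (-l * s))).trans_le (hs.trans (hup s))
    exact (pos_of_mul_pos_left this (exp_pos _).le).le
  have hupper : ∀ t, sSup (g '' Icc t (t + T)) ≤ C₂ * exp (-l * t) := fun t =>
    csSup_le ((nonempty_Icc.2 (by linarith)).image g) <| forall_mem_image.2 fun s hs =>
      (hup s).trans (mul_le_mul_of_nonneg_left (exp_le_exp.2 (by nlinarith [hs.1])) hC₂)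
  have hlower : ∀ t, C₁ * exp (-l * T) * exp (-l * t) ≤ sSup (g '' Icc t (t + T)) := by
    intro t
    obtain ⟨s, hs, hgs⟩ := hlow t
    calc C₁ * exp (-l * T) * exp (-l * t) = C₁ * exp (-l * (t + T)) := by
          rw [mul_assoc, ← exp_add]; ring_nf
      _ ≤ C₁ * exp (-l * s) :=
          mul_le_mul_of_nonneg_left (exp_le_exp.2 (by nlinarith [hs.2])) hC₁.le
      _ ≤ g s := hgs
      _ ≤ sSup (g '' Icc t (t + T)) :=
          le_csSup (isCompact_Icc.image hg).bddAbove (mem_image_of_mem g hs)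
  refine ⟨C₁ * exp (-l * T), C₂, by positivity, ?_, fun t _ => ⟨hlower t, hupper t⟩⟩
  simpa using (hlower 0).trans (hupper 0)

theorem stmt7_general (c T : ℝ) (hc : 0 < c) (hT : 0 < T) (α : ℝ → ℝ)
    (hper : Function.Periodic α T)
    (hbdd : ∃ C : ℝ, ∀ᵐ t ∂(volume : Measure ℝ), |α t| ≤ C)
    (hub : ∀ᵐ t ∂(volume : Measure ℝ), α t ≤ π ^ 2 / T ^ 2 + c ^ 2 / 4)
    (hstrict : 0 < volume {t ∈ Icc (0 : ℝ) T | α t < π ^ 2 / T ^ 2 + c ^ 2 / 4})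
    (havg : c ^ 2 / 4 < (1 / T) * ∫ t in (0 : ℝ)..T, α t)
    (x : ℝ → ℝ) (hx : ContDiff ℝ 2 x) (hnontriv : ∃ t, x t ≠ 0)
    (hode : ∀ᵐ t ∂(volume : Measure ℝ),
      deriv (deriv x) t + c * deriv x t + α t * x t = 0) :
    ∃ C₁ C₂ : ℝ, 0 < C₁ ∧ C₁ ≤ C₂ ∧ ∀ t ≥ (0 : ℝ),
      C₁ * Real.exp (-(c / 2) * t) ≤
          sSup ((fun s => |x s| + |deriv x s|) '' Icc t (t + T)) ∧
        sSup ((fun s => |x s| + |deriv x s|) '' Icc t (t + T)) ≤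
          C₂ * Real.exp (-(c / 2) * t) := by
  have hq := HillStabilityCondition.of_sub_const hT (by positivity) hper hbdd hub hstrict havg
  set y := fun t => exp (c / 2 * t) * x t
  have hy : IsHillSolution _ y := isHillSolution_exp_mul hx hode
  have hy0 : y ≠ 0 := fun h => by
    obtain ⟨t, ht⟩ := hnontriv
    exact ht (by simpa [y, exp_ne_zero] using congrFun h t)
  obtain ⟨D, hD, hrec⟩ := hq.exists_recurrence hy hy0
  obtain ⟨B, hB⟩ := exists_abs_le_of_recurrence hy.contDiff.continuous hT.ne' hD hrec
  obtain ⟨B', hB'⟩ := exists_abs_le_of_recurrence (hy.contDiff.continuous_deriv one_le_two)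
    hT.ne' hD (deriv_recurrence hy.differentiable hrec)
  obtain ⟨δ, hδ, hδy⟩ := exists_pos_le_max_of_recurrence hy.contDiff.continuous hT.ne' hD hrec
    (hq.apply_ne_zero_or_apply_add_ne_zero hy hy0)
  have hx₁ : Differentiable ℝ x := hx.differentiable (by norm_num)
  have hc2 : 0 ≤ c / 2 := by positivity
  refine exists_sSup_image_Icc_exp_bounds (C₂ := (1 + c / 2) * B + B')
    (hx₁.continuous.abs.add (hx.continuous_deriv one_le_two).abs) hc2 hT.le hδ (fun s => ?_)
    (fun t => ?_)
  · refine (abs_add_abs_deriv_le_exp_neg_mul hx₁ hc2 s).trans ?_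
    rw [mul_comm]
    gcongr
    exacts [hB s, hB' s]
  · have hlow : ∀ s, δ ≤ |y s| → δ * exp (-(c / 2) * s) ≤ |x s| + |deriv x s| := fun s hs =>
      (mul_comm δ _ ▸ mul_le_mul_of_nonneg_left hs (exp_pos _).le).trans
        (exp_neg_mul_mul_abs_le_abs_add_abs_deriv x _ s)
    rcases le_max_iff.1 (hδy t) with h | h
    · exact ⟨t, left_mem_Icc.2 (by linarith), hlow t h⟩
    · exact ⟨t + T, right_mem_Icc.2 (by linarith), hlow _ h⟩

/-- Under `α ≪ π²/T² + c²/4` and average of `α` greater than `c²/4`, every nontrivial solution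
of `x'' + c x' + α x = 0` decays at the exact exponential rate `c/2`. -/
theorem stmt7 (c T : ℝ) (hc : 0 < c) (hT : 0 < T) (α : ℝ → ℝ) (hmeas : Measurable α)
    (hper : Function.Periodic α T)
    (hbdd : ∃ C : ℝ, ∀ᵐ t ∂(volume : Measure ℝ), |α t| ≤ C)
    (hub : ∀ᵐ t ∂(volume : Measure ℝ), α t ≤ π ^ 2 / T ^ 2 + c ^ 2 / 4)
    (hstrict : 0 < volume {t ∈ Icc (0 : ℝ) T | α t < π ^ 2 / T ^ 2 + c ^ 2 / 4})
    (havg : c ^ 2 / 4 < (1 / T) * ∫ t in (0 : ℝ)..T, α t)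
    (x : ℝ → ℝ) (hx : ContDiff ℝ 2 x) (hnontriv : ∃ t, x t ≠ 0)
    (hode : ∀ᵐ t ∂(volume : Measure ℝ),
      deriv (deriv x) t + c * deriv x t + α t * x t = 0) :
    ∃ C₁ C₂ : ℝ, 0 < C₁ ∧ C₁ ≤ C₂ ∧ ∀ t ≥ (0 : ℝ),
      C₁ * Real.exp (-(c / 2) * t) ≤
          sSup ((fun s => |x s| + |deriv x s|) '' Icc t (t + T)) ∧
        sSup ((fun s => |x s| + |deriv x s|) '' Icc t (t + T)) ≤
          C₂ * Real.exp (-(c / 2) * t) :=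
  stmt7_general c T hc hT α hper hbdd hub hstrict havg x hx hnontriv hode
end

section
/- If α is T-periodic and continuous with α(t) ≤ π²/T² + c²/4 (strict on a positive-measure set) and (1/T)∫₀^T α > c²/4, where c > 0, then the Dirichlet problem u'' + (α(t) − c²/4)u = 0, u(t₀) = u(t₀ + T) = 0 has only the trivial solution, for any t₀ ∈ ℝ. -/
/-!
Sturm comparison with `sin`. If `u` is not identically zero on `[t₀, t₀ + T]`, it has a nodal
interval `(a, b)`, where it does not vanish. With `k = π / (b - a)` and `v t = sin (k (t - a))`,
the Wronskian `u' v - u v'` vanishes at `a` and `b` and has derivative `(k² - p) u v`, of constant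
sign since `p = α - c²/4 ≤ π²/T² ≤ k²`; hence `p ≡ k²` on `(a, b)`. This forces `b - a = T`, so
`α ≡ π²/T² + c²/4` on a whole period, contradicting the strict inequality on a set of positive
measure.
-/

open Real MeasureTheory Set

theorem exists_nodal_interval {β : Type*} [TopologicalSpace β] [T1Space β] {u : ℝ → β} {y : β}
    {t₀ t₁ t : ℝ} (hu : ContinuousOn u (Icc t₀ t₁)) (h₀ : u t₀ = y) (h₁ : u t₁ = y)
    (ht : t ∈ Icc t₀ t₁) (hne : u t ≠ y) :
    ∃ a b, t₀ ≤ a ∧ a < b ∧ b ≤ t₁ ∧ u a = y ∧ u b = y ∧ ∀ x ∈ Ioo a b, u x ≠ y := by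
  have hZ : IsClosed (Icc t₀ t₁ ∩ u ⁻¹' {y}) :=
    hu.preimage_isClosed_of_isClosed isClosed_Icc isClosed_singleton
  set L := Icc t₀ t ∩ (Icc t₀ t₁ ∩ u ⁻¹' {y})
  set R := Icc t t₁ ∩ (Icc t₀ t₁ ∩ u ⁻¹' {y})
  have hL : IsCompact L := isCompact_Icc.inter_right hZ
  have hR : IsCompact R := isCompact_Icc.inter_right hZ
  obtain ⟨⟨hta, hat⟩, -, hua⟩ : sSup L ∈ L :=
    hL.sSup_mem ⟨t₀, ⟨le_rfl, ht.1⟩, ⟨le_rfl, ht.1.trans ht.2⟩, h₀⟩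
  obtain ⟨⟨htb, hbt⟩, -, hub⟩ : sInf R ∈ R :=
    hR.sInf_mem ⟨t₁, ⟨ht.2, le_rfl⟩, ⟨ht.1.trans ht.2, le_rfl⟩, h₁⟩
  have hat' : sSup L < t := hat.lt_of_ne fun h => hne (h ▸ hua)
  have htb' : t < sInf R := htb.lt_of_ne' fun h => hne (h ▸ hub)
  refine ⟨sSup L, sInf R, hta, hat'.trans htb', hbt, hua, hub, fun x hx hux => ?_⟩
  have hx₀ : t₀ ≤ x := hta.trans hx.1.le
  have hx₁ : x ≤ t₁ := hx.2.le.trans hbt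
  rcases le_total x t with hxt | htx
  · exact hx.1.not_ge (le_csSup hL.bddAbove ⟨⟨hx₀, hxt⟩, ⟨hx₀, hx₁⟩, hux⟩)
  · exact hx.2.not_ge (csInf_le hR.bddBelow ⟨⟨htx, hx₁⟩, ⟨hx₀, hx₁⟩, hux⟩)

theorem hasDerivAt_wronskian_sin {U : ℝ → ℝ} (hU : Differentiable ℝ U)
    (hU' : Differentiable ℝ (deriv U)) (k a t : ℝ) :
    HasDerivAt (fun s => deriv U s * sin (k * (s - a)) - U s * (k * cos (k * (s - a))))
      ((deriv (deriv U) t + k ^ 2 * U t) * sin (k * (t - a))) t := by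
  have hlin : HasDerivAt (fun s => k * (s - a)) k t := by
    simpa using ((hasDerivAt_id t).sub_const a).const_mul k
  have := ((hU' t).hasDerivAt.mul ((hasDerivAt_sin _).comp t hlin)).sub
    ((hU t).hasDerivAt.mul (((hasDerivAt_cos _).comp t hlin).const_mul k))
  exact this.congr_deriv (by simp only [Function.comp]; ring)

theorem sturm_comparison_eq_of_pos {a b : ℝ} (hab : a < b) {U p : ℝ → ℝ} (hU : ContDiff ℝ 2 U)
    (hUa : U a = 0) (hUb : U b = 0) (hUpos : ∀ x ∈ Ioo a b, 0 < U x)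
    (hode : ∀ x ∈ Icc a b, deriv (deriv U) x + p x * U x = 0)
    (hp : ∀ x ∈ Icc a b, p x ≤ (π / (b - a)) ^ 2) :
    ∀ x ∈ Ioo a b, p x = (π / (b - a)) ^ 2 := by
  set k := π / (b - a)
  have hk : k * (b - a) = π := div_mul_cancel₀ _ (sub_pos.2 hab).ne'
  have hk₀ : 0 < k := div_pos pi_pos (sub_pos.2 hab)
  set f := fun t => (deriv (deriv U) t + k ^ 2 * U t) * sin (k * (t - a))
  have hf : Continuous f :=
    (((hU.deriv' (n := 1)).continuous_deriv_one).add
      (continuous_const.mul hU.continuous)).mul (by fun_prop)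
  have hint : ∫ t in a..b, f t = 0 := by
    rw [intervalIntegral.integral_eq_sub_of_hasDerivAt
      (fun t _ => hasDerivAt_wronskian_sin (hU.differentiable (by norm_num))
        hU.differentiable_deriv_two k a t) (hf.intervalIntegrable a b)]
    simp [hk, hUa, hUb]
  have hf_eq : ∀ x ∈ Icc a b, f x = (k ^ 2 - p x) * U x * sin (k * (x - a)) := by
    intro x hx
    simp only [f, eq_neg_of_add_eq_zero_left (hode x hx)]
    ring
  have hf_nonneg : ∀ x ∈ Icc a b, 0 ≤ f x := by
    intro x hx
    rw [hf_eq x hx]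
    have hU_nonneg : 0 ≤ U x := by
      rcases hx.1.eq_or_lt with rfl | hax
      · exact hUa.ge
      rcases hx.2.eq_or_lt with rfl | hxb
      · exact hUb.ge
      exact (hUpos x ⟨hax, hxb⟩).le
    refine mul_nonneg (mul_nonneg (sub_nonneg.2 (hp x hx)) hU_nonneg)
      (sin_nonneg_of_nonneg_of_le_pi (by nlinarith [hx.1]) ?_)
    nlinarith [hx.2]
  intro x hx
  by_contra hne
  have hfx : 0 < f x := by
    rw [hf_eq x (Ioo_subset_Icc_self hx)]
    refine mul_pos (mul_pos (sub_pos.2 ((hp x (Ioo_subset_Icc_self hx)).lt_of_ne hne))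
      (hUpos x hx)) (sin_pos_of_pos_of_lt_pi (by nlinarith [hx.1]) ?_)
    nlinarith [hx.2]
  have := intervalIntegral.integral_pos hab hf.continuousOn
    (fun y hy => hf_nonneg y (Ioc_subset_Icc_self hy)) ⟨x, Ioo_subset_Icc_self hx, hfx⟩
  linarith

theorem sturm_comparison_eq {a b : ℝ} (hab : a < b) {U p : ℝ → ℝ} (hU : ContDiff ℝ 2 U)
    (hUa : U a = 0) (hUb : U b = 0) (hU_ne : ∀ x ∈ Ioo a b, U x ≠ 0)
    (hode : ∀ x ∈ Icc a b, deriv (deriv U) x + p x * U x = 0)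
    (hp : ∀ x ∈ Icc a b, p x ≤ (π / (b - a)) ^ 2) :
    ∀ x ∈ Ioo a b, p x = (π / (b - a)) ^ 2 := by
  rcases isPreconnected_Ioo.mapsTo_Ioi_or_Iio hU.continuous.continuousOn hU_ne with hpos | hneg
  · exact sturm_comparison_eq_of_pos hab hU hUa hUb hpos hode hp
  · refine sturm_comparison_eq_of_pos hab hU.neg (by simp [hUa]) (by simp [hUb])
      (fun x hx => neg_pos.2 (hneg hx)) (fun x hx => ?_) hp
    simp only [deriv.fun_neg', mul_neg]
    linarith [hode x hx]

theorem Function.Periodic.eq_of_eqOn_Ioo {β : Type*} [TopologicalSpace β] [T2Space β]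
    {f : ℝ → β} {T : ℝ} (hf : Continuous f) (hper : Function.Periodic f T) (hT : 0 < T)
    {t₀ : ℝ} {y : β} (h : ∀ x ∈ Ioo t₀ (t₀ + T), f x = y) (x : ℝ) : f x = y := by
  have hIcc : EqOn f (fun _ => y) (Icc t₀ (t₀ + T)) :=
    EqOn.of_subset_closure h hf.continuousOn continuousOn_const Ioo_subset_Icc_self
      (closure_Ioo (by linarith)).ge
  obtain ⟨x', hx', hfx⟩ := hper.exists_mem_Ico hT x t₀
  exact hfx.trans (hIcc (Ico_subset_Icc_self hx'))

theorem stmt8_general (c T : ℝ) (hT : 0 < T) (α : ℝ → ℝ) (hα : Continuous α)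
    (hper : Function.Periodic α T)
    (hub : ∀ t, α t ≤ π ^ 2 / T ^ 2 + c ^ 2 / 4)
    (hstrict : 0 < volume {t ∈ Icc (0 : ℝ) T | α t < π ^ 2 / T ^ 2 + c ^ 2 / 4})
    (t₀ : ℝ) (u : ℝ → ℝ) (hu : ContDiff ℝ 2 u)
    (hode : ∀ t ∈ Icc t₀ (t₀ + T),
      deriv (deriv u) t + (α t - c ^ 2 / 4) * u t = 0)
    (hbc0 : u t₀ = 0) (hbcT : u (t₀ + T) = 0) :
    ∀ t ∈ Icc t₀ (t₀ + T), u t = 0 := by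
  intro t ht
  by_contra hne
  obtain ⟨a, b, hta, hab, hbt, hua, hub0, hu_ne⟩ :=
    exists_nodal_interval hu.continuous.continuousOn hbc0 hbcT ht hne
  have hK : π ^ 2 / T ^ 2 ≤ (π / (b - a)) ^ 2 := by
    rw [div_pow]
    gcongr
    linarith
  have hrigid := sturm_comparison_eq hab hu hua hub0 hu_ne
    (fun x hx => hode x (Icc_subset_Icc hta hbt hx)) (fun x _ => by linarith [hub x])
  have hba : b - a = T := by
    refine (show b - a ≤ T by linarith).antisymm (not_lt.1 fun hlt => ?_)
    have hK' : π ^ 2 / T ^ 2 < (π / (b - a)) ^ 2 := by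
      rw [div_pow]
      gcongr
    linarith [hrigid ((a + b) / 2) ⟨by linarith, by linarith⟩, hub ((a + b) / 2)]
  rw [hba, div_pow] at hrigid
  obtain rfl : a = t₀ := by linarith
  obtain rfl : b = a + T := by linarith
  have hconst : ∀ x, α x = π ^ 2 / T ^ 2 + c ^ 2 / 4 :=
    hper.eq_of_eqOn_Ioo hα hT fun x hx => by linarith [hrigid x hx]
  simp [hconst] at hstrict

/-- If `α` is continuous, `T`-periodic, `α ≪ π²/T² + c²/4` and the average of `α` exceeds
`c²/4`, then the Dirichlet problem `u'' + (α − c²/4)u = 0`, `u(t₀) = u(t₀+T) = 0`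
has only the trivial solution. -/
theorem stmt8 (c T : ℝ) (hc : 0 < c) (hT : 0 < T) (α : ℝ → ℝ) (hα : Continuous α)
    (hper : Function.Periodic α T)
    (hub : ∀ t, α t ≤ π ^ 2 / T ^ 2 + c ^ 2 / 4)
    (hstrict : 0 < volume {t ∈ Icc (0 : ℝ) T | α t < π ^ 2 / T ^ 2 + c ^ 2 / 4})
    (havg : c ^ 2 / 4 < (1 / T) * ∫ t in (0 : ℝ)..T, α t)
    (t₀ : ℝ) (u : ℝ → ℝ) (hu : ContDiff ℝ 2 u)
    (hode : ∀ t ∈ Icc t₀ (t₀ + T),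
      deriv (deriv u) t + (α t - c ^ 2 / 4) * u t = 0)
    (hbc0 : u t₀ = 0) (hbcT : u (t₀ + T) = 0) :
    ∀ t ∈ Icc t₀ (t₀ + T), u t = 0 :=
  stmt8_general c T hT α hα hper hub hstrict t₀ u hu hode hbc0 hbcT
end

section
/- For the Mathieu-type equation y'' + (1/4)(1 + ε cos t) y = 0, the discriminant Δ(ε) = y₁(2π, ε) + y₂'(2π, ε), where y₁, y₂ are the solutions with y₁(0)=y₂'(0)=1, y₁'(0)=y₂(0)=0, satisfies Δ(0) = -2 and Δ(ε) < -2 for all sufficiently small ε ≠ 0; consequently the Floquet multipliers (roots of μ² − Δ(ε)μ + 1 = 0) are real and distinct, one of modulus greater than 1 and one of modulus less than 1. -/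
/-!
At `ε = 0` the solutions are `cos (t/2)` and `2 sin (t/2)`, so the monodromy matrix
`M = [[a, b], [c, d]] = [[y₁, y₂], [y₁', y₂']](2π)` is `-I`. First-order perturbation theory gives
explicit approximate solutions with residual `O(ε²)`, and a Gronwall estimate turns this into
`M(ε) = -I + ε [[0, π/2], [π/8, 0]] + O(ε²)`. Since `det M = 1` (the Wronskian is constant),
`tr M + 2 = (a + 1)(d + 1) - b c = -ε² π² / 16 + O(|ε|³)`, which is negative for small `ε ≠ 0`.
Then `μ² - Δ μ + 1` has discriminant `Δ² - 4 > 0`, and its roots have product `1`.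
-/

open Real Set

theorem abs_le_of_abs_deriv_deriv_le {e e' e'' : ℝ → ℝ} {T F : ℝ} (hT : 0 ≤ T)
    (he : ∀ t, HasDerivAt e (e' t) t) (he' : ∀ t, HasDerivAt e' (e'' t) t)
    (h0 : e 0 = 0) (h0' : e' 0 = 0) (hb : ∀ t ∈ Icc 0 T, |e'' t| ≤ |e t| + F) :
    |e T| ≤ F * (exp T - 1) ∧ |e' T| ≤ F * (exp T - 1) := by
  have hF : 0 ≤ F := by simpa [h0] using (abs_nonneg _).trans (hb 0 ⟨le_rfl, hT⟩)
  have hcont : Continuous fun t => (e t, e' t) :=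
    (continuous_iff_continuousAt.2 fun t => (he t).continuousAt).prodMk
      (continuous_iff_continuousAt.2 fun t => (he' t).continuousAt)
  have key := norm_le_gronwallBound_of_norm_deriv_right_le (K := 1) (δ := 0)
    (f' := fun t => (e' t, e'' t)) hcont.continuousOn
    (fun t _ => ((he t).prodMk (he' t)).hasDerivWithinAt) (by simp [h0, h0'])
    (fun t ht => by
      simp only [Prod.norm_def, Real.norm_eq_abs, one_mul]
      exact max_le ((le_max_right _ _).trans (le_add_of_nonneg_right hF))
        ((hb t (Ico_subset_Icc_self ht)).trans (add_le_add_left (le_max_left _ _) _)))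
    T ⟨hT, le_rfl⟩
  simp only [gronwallBound_of_K_ne_0 one_ne_zero, Prod.norm_def, Real.norm_eq_abs, zero_mul,
    zero_add, div_one, one_mul, sub_zero] at key
  exact max_le_iff.1 key

theorem wronskian_eq_of_hill {q y₁ y₂ : ℝ → ℝ} (hy₁ : ContDiff ℝ 2 y₁)
    (hy₂ : ContDiff ℝ 2 y₂) (hode₁ : ∀ t, deriv (deriv y₁) t + q t * y₁ t = 0)
    (hode₂ : ∀ t, deriv (deriv y₂) t + q t * y₂ t = 0) (t : ℝ) :
    y₁ t * deriv y₂ t - deriv y₁ t * y₂ t = y₁ 0 * deriv y₂ 0 - deriv y₁ 0 * y₂ 0 := by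
  have d₁ := hy₁.differentiable two_ne_zero
  have d₂ := hy₂.differentiable two_ne_zero
  have d₁' := hy₁.differentiable_deriv_two
  have d₂' := hy₂.differentiable_deriv_two
  refine is_const_of_deriv_eq_zero (f := fun t => y₁ t * deriv y₂ t - deriv y₁ t * y₂ t)
    (by fun_prop) (fun t => ?_) t 0
  refine (((d₁ t).hasDerivAt.mul (d₂' t).hasDerivAt).sub
    ((d₁' t).hasDerivAt.mul (d₂ t).hasDerivAt)).deriv.trans ?_
  linear_combination y₁ t * hode₂ t - y₂ t * hode₁ t

theorem hill_solution_approx {q y G G' G'' : ℝ → ℝ} {T F : ℝ} (hT : 0 ≤ T)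
    (hy : ContDiff ℝ 2 y) (hode : ∀ t, deriv (deriv y) t + q t * y t = 0)
    (hG : ∀ t, HasDerivAt G (G' t) t) (hG' : ∀ t, HasDerivAt G' (G'' t) t)
    (hq : ∀ t ∈ Icc 0 T, |q t| ≤ 1) (hres : ∀ t ∈ Icc 0 T, |G'' t + q t * G t| ≤ F)
    (h0 : y 0 = G 0) (h0' : deriv y 0 = G' 0) :
    |y T - G T| ≤ F * (exp T - 1) ∧ |deriv y T - G' T| ≤ F * (exp T - 1) := by
  refine abs_le_of_abs_deriv_deriv_le (e'' := fun t => deriv (deriv y) t - G'' t) hT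
    (fun t => ((hy.differentiable two_ne_zero) t).hasDerivAt.sub (hG t))
    (fun t => (hy.differentiable_deriv_two t).hasDerivAt.sub (hG' t))
    (sub_eq_zero.2 h0) (sub_eq_zero.2 h0') fun t ht => ?_
  calc |deriv (deriv y) t - G'' t| = |q t * (y t - G t) + (G'' t + q t * G t)| := by
        rw [← abs_neg]; congr 1; linear_combination -hode t
    _ ≤ |q t| * |y t - G t| + |G'' t + q t * G t| := by
        grw [abs_add_le, abs_mul]
    _ ≤ |y t - G t| + F := by
        grw [hq t ht, hres t ht, one_mul]

theorem trace_lt_neg_two {a b c d ε η : ℝ} (hε : ε ≠ 0) (hdet : a * d - b * c = 1)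
    (ha : |a + 1| ≤ η) (hb : |b - ε * π / 2| ≤ η) (hc : |c - ε * π / 8| ≤ η)
    (hd : |d + 1| ≤ η) (hη : η ≤ |ε| / 8) : a + d < -2 := by
  have htr : a + d + 2 = (a + 1) * (d + 1) - b * c := by linear_combination -hdet
  have hη₀ : 0 ≤ η := (abs_nonneg _).trans ha
  have hdiag : (a + 1) * (d + 1) ≤ η ^ 2 := by
    refine (le_abs_self _).trans ?_
    rw [abs_mul, sq]
    exact mul_le_mul ha hd (abs_nonneg _) hη₀
  have hoff : ε ^ 2 * π ^ 2 / 16 - |ε| * η * (5 * π / 8) - η ^ 2 ≤ b * c := by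
    have e₁ : |ε * π / 2 * (c - ε * π / 8)| ≤ |ε| * η * (π / 2) := by
      rw [abs_mul, abs_div, abs_mul, abs_of_pos pi_pos, abs_two]
      linarith [mul_le_mul_of_nonneg_left hc (by positivity : 0 ≤ |ε| * π / 2)]
    have e₂ : |ε * π / 8 * (b - ε * π / 2)| ≤ |ε| * η * (π / 8) := by
      rw [abs_mul, abs_div, abs_mul, abs_of_pos pi_pos, abs_of_pos (by norm_num : (0 : ℝ) < 8)]
      linarith [mul_le_mul_of_nonneg_left hb (by positivity : 0 ≤ |ε| * π / 8)]
    have e₃ : |(b - ε * π / 2) * (c - ε * π / 8)| ≤ η ^ 2 := by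
      rw [abs_mul, sq]; exact mul_le_mul hb hc (abs_nonneg _) hη₀
    have := neg_abs_le (ε * π / 2 * (c - ε * π / 8))
    have := neg_abs_le (ε * π / 8 * (b - ε * π / 2))
    have := neg_abs_le ((b - ε * π / 2) * (c - ε * π / 8))
    nlinarith
  have hε₀ : 0 < |ε| := abs_pos.2 hε
  have hsq : ε ^ 2 = |ε| ^ 2 := (sq_abs ε).symm
  have hη₂ : η ^ 2 ≤ |ε| ^ 2 / 64 := by nlinarith
  have hπ : 0 < 4 * π ^ 2 - 5 * π - 2 := by nlinarith [pi_gt_three]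
  nlinarith [mul_le_mul_of_nonneg_left hη (by positivity : 0 ≤ |ε| * (5 * π / 8)), pi_pos,
    mul_pos (pow_pos hε₀ 2) hπ]

theorem exists_roots_of_lt_neg_two {Δ : ℝ} (hΔ : Δ < -2) :
    ∃ μ₁ μ₂ : ℝ, μ₁ ≠ μ₂ ∧ μ₁ ^ 2 - Δ * μ₁ + 1 = 0 ∧ μ₂ ^ 2 - Δ * μ₂ + 1 = 0 ∧
      1 < |μ₁| ∧ |μ₂| < 1 := by
  have hD : 0 < Δ ^ 2 - 4 := by nlinarith
  set r := √(Δ ^ 2 - 4)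
  have hr2 : r ^ 2 = Δ ^ 2 - 4 := sq_sqrt hD.le
  have hr0 : 0 < r := sqrt_pos.2 hD
  have hrΔ : r < -Δ := by nlinarith
  have hrΔ2 : -Δ - 2 < r := by nlinarith
  refine ⟨(Δ - r) / 2, (Δ + r) / 2, by intro h; linarith, by linear_combination hr2 / 4,
    by linear_combination hr2 / 4, ?_, ?_⟩
  · rw [abs_of_neg (by linarith)]
    linarith
  · rw [abs_lt]
    constructor <;> linarith

/- First-order approximations `y₀ + ε u` to `y₁` and `y₂`, where `u'' + u/4 = -cos t · y₀/4` and
`u 0 = u' 0 = 0`; resonance with `y₀` produces the secular terms `t sin (t/2)`, `t cos (t/2)`,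
and the residual is `ε² cos t · u / 4`. -/

noncomputable def evenApprox (ε t : ℝ) : ℝ :=
  cos (t / 2) + ε * ((cos (3 * t / 2) - cos (t / 2)) / 16 - t * sin (t / 2) / 8)

noncomputable def evenApproxDeriv (ε t : ℝ) : ℝ :=
  -sin (t / 2) / 2 - ε * (3 * (sin (3 * t / 2) + sin (t / 2)) / 32 + t * cos (t / 2) / 16)

noncomputable def evenApproxDeriv2 (ε t : ℝ) : ℝ :=
  -cos (t / 2) / 4 - ε * ((9 * cos (3 * t / 2) + 7 * cos (t / 2)) / 64 - t * sin (t / 2) / 32)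

noncomputable def oddApprox (ε t : ℝ) : ℝ :=
  2 * sin (t / 2) + ε * ((sin (3 * t / 2) + sin (t / 2)) / 8 - t * cos (t / 2) / 4)

noncomputable def oddApproxDeriv (ε t : ℝ) : ℝ :=
  cos (t / 2) + ε * (3 * (cos (3 * t / 2) - cos (t / 2)) / 16 + t * sin (t / 2) / 8)

noncomputable def oddApproxDeriv2 (ε t : ℝ) : ℝ :=
  -sin (t / 2) / 2 + ε * ((7 * sin (t / 2) - 9 * sin (3 * t / 2)) / 32 + t * cos (t / 2) / 16)

theorem hasDerivAt_evenApprox (ε t : ℝ) :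
    HasDerivAt (evenApprox ε) (evenApproxDeriv ε t) t := by
  have hc := ((hasDerivAt_id' t).div_const 2).cos
  have hs := ((hasDerivAt_id' t).div_const 2).sin
  have hc₃ := (((hasDerivAt_id' t).const_mul 3).div_const 2).cos
  exact (hc.add ((((hc₃.sub hc).div_const 16).sub
    (((hasDerivAt_id' t).mul hs).div_const 8)).const_mul ε)).congr_deriv
    (by rw [evenApproxDeriv]; ring)

theorem hasDerivAt_evenApproxDeriv (ε t : ℝ) :
    HasDerivAt (evenApproxDeriv ε) (evenApproxDeriv2 ε t) t := by
  have hc := ((hasDerivAt_id' t).div_const 2).cos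
  have hs := ((hasDerivAt_id' t).div_const 2).sin
  have hs₃ := (((hasDerivAt_id' t).const_mul 3).div_const 2).sin
  exact ((hs.neg.div_const 2).sub (((((hs₃.add hs).const_mul 3).div_const 32).add
    (((hasDerivAt_id' t).mul hc).div_const 16)).const_mul ε)).congr_deriv
    (by rw [evenApproxDeriv2]; ring)

theorem hasDerivAt_oddApprox (ε t : ℝ) :
    HasDerivAt (oddApprox ε) (oddApproxDeriv ε t) t := by
  have hc := ((hasDerivAt_id' t).div_const 2).cos
  have hs := ((hasDerivAt_id' t).div_const 2).sin
  have hs₃ := (((hasDerivAt_id' t).const_mul 3).div_const 2).sin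
  exact ((hs.const_mul 2).add ((((hs₃.add hs).div_const 8).sub
    (((hasDerivAt_id' t).mul hc).div_const 4)).const_mul ε)).congr_deriv
    (by rw [oddApproxDeriv]; ring)

theorem hasDerivAt_oddApproxDeriv (ε t : ℝ) :
    HasDerivAt (oddApproxDeriv ε) (oddApproxDeriv2 ε t) t := by
  have hc := ((hasDerivAt_id' t).div_const 2).cos
  have hs := ((hasDerivAt_id' t).div_const 2).sin
  have hc₃ := (((hasDerivAt_id' t).const_mul 3).div_const 2).cos
  exact (hc.add (((((hc₃.sub hc).const_mul 3).div_const 16).add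
    (((hasDerivAt_id' t).mul hs).div_const 8)).const_mul ε)).congr_deriv
    (by rw [oddApproxDeriv2]; ring)

theorem cos_eq_two_mul_cos_half_sq_sub_one (t : ℝ) : cos t = 2 * cos (t / 2) ^ 2 - 1 := by
  rw [← cos_two_mul, mul_div_cancel₀ t two_ne_zero]

theorem evenApprox_residual (ε t : ℝ) :
    evenApproxDeriv2 ε t + 1 / 4 * (1 + ε * cos t) * evenApprox ε t =
      ε ^ 2 * cos t * ((cos (3 * t / 2) - cos (t / 2)) / 16 - t * sin (t / 2) / 8) / 4 := by
  have h₃ : cos (3 * t / 2) = 4 * cos (t / 2) ^ 3 - 3 * cos (t / 2) := by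
    rw [← cos_three_mul, mul_div_assoc]
  rw [evenApproxDeriv2, evenApprox, h₃, cos_eq_two_mul_cos_half_sq_sub_one t]
  ring

theorem oddApprox_residual (ε t : ℝ) :
    oddApproxDeriv2 ε t + 1 / 4 * (1 + ε * cos t) * oddApprox ε t =
      ε ^ 2 * cos t * ((sin (3 * t / 2) + sin (t / 2)) / 8 - t * cos (t / 2) / 4) / 4 := by
  have h₃ : sin (3 * t / 2) = 3 * sin (t / 2) - 4 * sin (t / 2) ^ 3 := by
    rw [← sin_three_mul, mul_div_assoc]
  rw [oddApproxDeriv2, oddApprox, h₃, cos_eq_two_mul_cos_half_sq_sub_one t]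
  linear_combination (ε * sin (t / 2)) * sin_sq_add_cos_sq (t / 2)

theorem cos_three_pi : cos (3 * π) = -1 := by
  rw [show 3 * π = π + 2 * π by ring, cos_add_two_pi, cos_pi]

theorem sin_three_pi : sin (3 * π) = 0 := by
  rw [show 3 * π = π + 2 * π by ring, sin_add_two_pi, sin_pi]

theorem evenApprox_two_pi (ε : ℝ) : evenApprox ε (2 * π) = -1 := by
  simp [evenApprox, mul_div_assoc, cos_three_pi]

theorem evenApproxDeriv_two_pi (ε : ℝ) : evenApproxDeriv ε (2 * π) = ε * π / 8 := by
  simp [evenApproxDeriv, mul_div_assoc, sin_three_pi]; ring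

theorem oddApprox_two_pi (ε : ℝ) : oddApprox ε (2 * π) = ε * π / 2 := by
  simp [oddApprox, mul_div_assoc, sin_three_pi]; ring

theorem oddApproxDeriv_two_pi (ε : ℝ) : oddApproxDeriv ε (2 * π) = -1 := by
  simp [oddApproxDeriv, mul_div_assoc, cos_three_pi]

theorem abs_mathieu_coeff_le {ε : ℝ} (hε : |ε| ≤ 1) (t : ℝ) :
    |1 / 4 * (1 + ε * cos t)| ≤ 1 := by
  have : |ε * cos t| ≤ 1 := by
    rw [abs_mul]; exact mul_le_one₀ hε (abs_nonneg _) (abs_cos_le_one t)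
  rw [abs_le] at this ⊢; constructor <;> linarith

theorem abs_sq_mul_cos_mul_div_four_le {ε u : ℝ} (t : ℝ) (hu : |u| ≤ 2) :
    |ε ^ 2 * cos t * u / 4| ≤ ε ^ 2 / 2 := by
  rw [abs_div, abs_mul, abs_mul, abs_of_nonneg (sq_nonneg ε),
    abs_of_pos (by norm_num : (0 : ℝ) < 4)]
  have := mul_le_mul (abs_cos_le_one t) hu (abs_nonneg u) zero_le_one
  nlinarith [sq_nonneg ε]

theorem abs_mul_le_two_pi {t x : ℝ} (ht : t ∈ Icc 0 (2 * π)) (hx : |x| ≤ 1) :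
    |t * x| ≤ 2 * π := by
  rw [abs_mul, abs_of_nonneg ht.1]
  exact (mul_le_of_le_one_right ht.1 hx).trans ht.2

theorem abs_evenCorrection_le {t : ℝ} (ht : t ∈ Icc 0 (2 * π)) :
    |(cos (3 * t / 2) - cos (t / 2)) / 16 - t * sin (t / 2) / 8| ≤ 2 := by
  have := abs_le.1 (abs_mul_le_two_pi ht (abs_sin_le_one (t / 2)))
  have := abs_le.1 (abs_cos_le_one (3 * t / 2))
  have := abs_le.1 (abs_cos_le_one (t / 2))
  rw [abs_le]; constructor <;> linarith [pi_lt_d2]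

theorem abs_oddCorrection_le {t : ℝ} (ht : t ∈ Icc 0 (2 * π)) :
    |(sin (3 * t / 2) + sin (t / 2)) / 8 - t * cos (t / 2) / 4| ≤ 2 := by
  have := abs_le.1 (abs_mul_le_two_pi ht (abs_cos_le_one (t / 2)))
  have := abs_le.1 (abs_sin_le_one (3 * t / 2))
  have := abs_le.1 (abs_sin_le_one (t / 2))
  rw [abs_le]; constructor <;> linarith [pi_lt_d2]

theorem even_solution_approx {ε : ℝ} {y : ℝ → ℝ} (hε : |ε| ≤ 1) (hy : ContDiff ℝ 2 y)
    (hode : ∀ t, deriv (deriv y) t + 1 / 4 * (1 + ε * cos t) * y t = 0)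
    (hic : y 0 = 1 ∧ deriv y 0 = 0) :
    |y (2 * π) + 1| ≤ ε ^ 2 / 2 * (exp (2 * π) - 1) ∧
      |deriv y (2 * π) - ε * π / 8| ≤ ε ^ 2 / 2 * (exp (2 * π) - 1) := by
  have h := hill_solution_approx (q := fun t => 1 / 4 * (1 + ε * cos t)) (T := 2 * π)
    (by positivity) hy hode (hasDerivAt_evenApprox ε) (hasDerivAt_evenApproxDeriv ε)
    (fun t _ => abs_mathieu_coeff_le hε t)
    (fun t ht => by
      rw [evenApprox_residual]; exact abs_sq_mul_cos_mul_div_four_le t (abs_evenCorrection_le ht))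
    (by simp [hic.1, evenApprox]) (by simp [hic.2, evenApproxDeriv])
  rwa [evenApprox_two_pi, evenApproxDeriv_two_pi, sub_neg_eq_add] at h

theorem odd_solution_approx {ε : ℝ} {y : ℝ → ℝ} (hε : |ε| ≤ 1) (hy : ContDiff ℝ 2 y)
    (hode : ∀ t, deriv (deriv y) t + 1 / 4 * (1 + ε * cos t) * y t = 0)
    (hic : y 0 = 0 ∧ deriv y 0 = 1) :
    |y (2 * π) - ε * π / 2| ≤ ε ^ 2 / 2 * (exp (2 * π) - 1) ∧
      |deriv y (2 * π) + 1| ≤ ε ^ 2 / 2 * (exp (2 * π) - 1) := by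
  have h := hill_solution_approx (q := fun t => 1 / 4 * (1 + ε * cos t)) (T := 2 * π)
    (by positivity) hy hode (hasDerivAt_oddApprox ε) (hasDerivAt_oddApproxDeriv ε)
    (fun t _ => abs_mathieu_coeff_le hε t)
    (fun t ht => by
      rw [oddApprox_residual]; exact abs_sq_mul_cos_mul_div_four_le t (abs_oddCorrection_le ht))
    (by simp [hic.1, oddApprox]) (by simp [hic.2, oddApproxDeriv])
  rwa [oddApprox_two_pi, oddApproxDeriv_two_pi, sub_neg_eq_add] at h

/-- For the Mathieu-type equation `y'' + (1/4)(1 + ε cos t) y = 0`, the discriminant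
`Δ(ε) = y₁(2π,ε) + y₂'(2π,ε)` satisfies `Δ(0) = -2` and `Δ(ε) < -2` for small `ε ≠ 0`;
hence the Floquet multipliers are real and distinct, one of modulus `> 1`, one `< 1`. -/
theorem stmt12 (y₁ y₂ : ℝ → ℝ → ℝ)
    (hy₁ : ∀ ε, ContDiff ℝ 2 (y₁ ε)) (hy₂ : ∀ ε, ContDiff ℝ 2 (y₂ ε))
    (hode₁ : ∀ ε t, deriv (deriv (y₁ ε)) t + (1 / 4) * (1 + ε * Real.cos t) * y₁ ε t = 0)
    (hode₂ : ∀ ε t, deriv (deriv (y₂ ε)) t + (1 / 4) * (1 + ε * Real.cos t) * y₂ ε t = 0)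
    (hic₁ : ∀ ε, y₁ ε 0 = 1 ∧ deriv (y₁ ε) 0 = 0)
    (hic₂ : ∀ ε, y₂ ε 0 = 0 ∧ deriv (y₂ ε) 0 = 1) :
    y₁ 0 (2 * π) + deriv (y₂ 0) (2 * π) = -2 ∧
      ∃ δ > (0 : ℝ), ∀ ε : ℝ, |ε| < δ → ε ≠ 0 →
        (y₁ ε (2 * π) + deriv (y₂ ε) (2 * π) < -2) ∧
        ∃ μ₁ μ₂ : ℝ, μ₁ ≠ μ₂ ∧
          μ₁ ^ 2 - (y₁ ε (2 * π) + deriv (y₂ ε) (2 * π)) * μ₁ + 1 = 0 ∧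
          μ₂ ^ 2 - (y₁ ε (2 * π) + deriv (y₂ ε) (2 * π)) * μ₂ + 1 = 0 ∧
          1 < |μ₁| ∧ |μ₂| < 1 := by
  set K := exp (2 * π) - 1
  have hK : 1 ≤ K := by linarith [add_one_le_exp (2 * π), pi_gt_three]
  refine ⟨?_, 1 / (4 * K), by positivity, fun ε hεδ hε₀ => ?_⟩
  · obtain ⟨h₁, -⟩ := even_solution_approx (by simp) (hy₁ 0) (hode₁ 0) (hic₁ 0)
    obtain ⟨-, h₂⟩ := odd_solution_approx (by simp) (hy₂ 0) (hode₂ 0) (hic₂ 0)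
    simp only [ne_eq, OfNat.ofNat_ne_zero, not_false_eq_true, zero_pow, zero_div, zero_mul,
      abs_nonpos_iff] at h₁ h₂
    linarith
  have hεK : |ε| * K < 1 / 4 := by
    rwa [lt_div_iff₀ (by positivity), mul_comm 4, ← mul_assoc, ← lt_div_iff₀ four_pos] at hεδ
  have hε : |ε| ≤ 1 := by nlinarith [abs_nonneg ε]
  obtain ⟨ha, hc⟩ := even_solution_approx hε (hy₁ ε) (hode₁ ε) (hic₁ ε)
  obtain ⟨hb, hd⟩ := odd_solution_approx hε (hy₂ ε) (hode₂ ε) (hic₂ ε)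
  have hdet := wronskian_eq_of_hill (q := fun t => 1 / 4 * (1 + ε * cos t)) (hy₁ ε) (hy₂ ε)
    (hode₁ ε) (hode₂ ε) (2 * π)
  rw [(hic₁ ε).1, (hic₁ ε).2, (hic₂ ε).1, (hic₂ ε).2] at hdet
  have hΔ := trace_lt_neg_two hε₀ (by linarith) ha hb hc hd
    (by rw [← sq_abs]; nlinarith [abs_nonneg ε])
  exact ⟨hΔ, exists_roots_of_lt_neg_two hΔ⟩
end

section
/- Let T > 0 and q : [t₀, t₀+T] → ℝ be integrable with q(t) ≤ π²/T² a.e., strict on a set of positive measure. Then the Dirichlet problem u'' + q(t)u = 0, u(t₀) = u(t₀+T) = 0, admits only the trivial solution. -/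
/-!
Picone's identity against `v = sin (π (t - t₀) / T)`, which solves `v'' + (π/T)² v = 0` and is
positive on the open interval: with `g = u v' / v`,
`(u u' - u g)' = (u' - g)² + ((π/T)² - q) u²`.
Since `u` and `v` both vanish at the endpoints while `v'` does not, `g` extends continuously to
`[t₀, t₀ + T]` (l'Hôpital), so integrating gives `0` on the left and the sum of two nonnegative
integrals on the right. The first vanishing forces `(u / v)' = 0`, i.e. `u = κ v`; the second
forces `u` to vanish somewhere on the set of positive measure where `q < (π/T)²`, so `κ = 0`.
-/

open Real MeasureTheory Set Filter Topology

theorem hasDerivAt_picone {u u' v v' : ℝ → ℝ} {u'' v'' t : ℝ}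
    (hu : HasDerivAt u (u' t) t) (hu' : HasDerivAt u' u'' t)
    (hv : HasDerivAt v (v' t) t) (hv' : HasDerivAt v' v'' t) (hvt : v t ≠ 0) :
    HasDerivAt (fun s => u' s * u s - u s ^ 2 * v' s / v s)
      ((u' t - u t * v' t / v t) ^ 2 + u t * u'' - u t ^ 2 * v'' / v t) t := by
  refine ((hu'.mul hu).sub (((hu.fun_pow 2).mul hv').div hv hvt)).congr_deriv ?_
  simp only [Pi.mul_apply]
  field_simp
  ring

theorem tendsto_mul_div_of_eq_zero {u v w : ℝ → ℝ} {e du dv : ℝ}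
    (hu : HasDerivAt u du e) (hue : u e = 0) (hv : HasDerivAt v dv e) (hve : v e = 0)
    (hdv : dv ≠ 0) (hw : Tendsto w (𝓝[≠] e) (𝓝 dv)) :
    Tendsto (fun s => u s * w s / v s) (𝓝[≠] e) (𝓝 du) := by
  have hslope := ((hasDerivAt_iff_tendsto_slope.mp hu).div
    (hasDerivAt_iff_tendsto_slope.mp hv) hdv).mul hw
  rw [div_mul_cancel₀ _ hdv] at hslope
  refine hslope.congr' ?_
  filter_upwards [self_mem_nhdsWithin] with s hs
  rw [Pi.div_apply, slope_def_field, slope_def_field, hue, hve, sub_zero, sub_zero,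
    div_div_div_cancel_right₀ (sub_ne_zero.mpr hs), div_mul_eq_mul_div]

theorem exists_continuousOn_Icc_eqOn_mul_div {u v v' : ℝ → ℝ} {a b : ℝ}
    (hu : Differentiable ℝ u) (hua : u a = 0) (hub : u b = 0)
    (hv : ∀ t, HasDerivAt v (v' t) t) (hv' : Continuous v')
    (hva : v a = 0) (hvb : v b = 0) (hv'a : v' a ≠ 0) (hv'b : v' b ≠ 0)
    (hv0 : ∀ t ∈ Ioo a b, v t ≠ 0) :
    ∃ g, ContinuousOn g (Icc a b) ∧ EqOn g (fun t => u t * v' t / v t) (Ioo a b) := by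
  have hcont : ContinuousOn (fun t => u t * v' t / v t) (Ioo a b) :=
    (hu.continuous.continuousOn.mul hv'.continuousOn).div
      (continuous_iff_continuousAt.mpr fun t => (hv t).continuousAt).continuousOn hv0
  have hlim : ∀ e, u e = 0 → v e = 0 → v' e ≠ 0 →
      Tendsto (fun t => u t * v' t / v t) (𝓝[≠] e) (𝓝 (deriv u e)) := fun e hue hve hv'e =>
    tendsto_mul_div_of_eq_zero (hu e).hasDerivAt hue (hv e) hve hv'e
      (hv'.continuousAt.tendsto.mono_left nhdsWithin_le_nhds)
  exact ⟨extendFrom (Ioo a b) _,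
    continuousOn_Icc_extendFrom_Ioo hcont ((hlim a hua hva hv'a).mono_left (nhdsGT_le_nhdsNE a))
      ((hlim b hub hvb hv'b).mono_left (nhdsLT_le_nhdsNE b)),
    extendFrom_extends hcont⟩

theorem integrableOn_const_sub_mul_sq {u q : ℝ → ℝ} {a b : ℝ} (k : ℝ)
    (hq : IntegrableOn q (Icc a b)) (hu : ContinuousOn u (Icc a b)) :
    IntegrableOn (fun t => (k - q t) * u t ^ 2) (Icc a b) :=
  ((integrableOn_const isCompact_Icc.measure_ne_top).sub hq).mul_continuousOn (hu.pow 2)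
    isCompact_Icc

theorem integral_sq_add_integral_eq_zero {u v v' g q : ℝ → ℝ} {a b k : ℝ} (hab : a ≤ b)
    (hu : ContDiff ℝ 2 u) (hua : u a = 0) (hub : u b = 0)
    (hode : ∀ t ∈ Ioo a b, deriv (deriv u) t + q t * u t = 0)
    (hq : IntegrableOn q (Icc a b))
    (hv : ∀ t ∈ Ioo a b, HasDerivAt v (v' t) t) (hv' : ∀ t ∈ Ioo a b, HasDerivAt v' (-k * v t) t)
    (hv0 : ∀ t ∈ Ioo a b, v t ≠ 0)
    (hg : ContinuousOn g (Icc a b)) (hgeq : EqOn g (fun t => u t * v' t / v t) (Ioo a b)) :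
    (∫ t in Icc a b, (deriv u t - g t) ^ 2) + ∫ t in Icc a b, (k - q t) * u t ^ 2 = 0 := by
  have hu1 : ContDiff ℝ 1 (deriv u) := hu.iterate_deriv' 1 1
  have hdu : ∀ t, HasDerivAt u (deriv u t) t :=
    fun t => (hu.differentiable two_ne_zero t).hasDerivAt
  have hddu : ∀ t, HasDerivAt (deriv u) (deriv (deriv u) t) t :=
    fun t => (hu1.differentiable one_ne_zero t).hasDerivAt
  set P := fun t => deriv u t * u t - u t * g t
  have hP : ContinuousOn P (Icc a b) :=
    (hu1.continuous.mul hu.continuous).continuousOn.sub (hu.continuous.continuousOn.mul hg)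
  have hPderiv : ∀ t ∈ Ioo a b,
      HasDerivAt P ((deriv u t - g t) ^ 2 + (k - q t) * u t ^ 2) t := by
    intro t ht
    have hPeq : (fun s => deriv u s * u s - u s ^ 2 * v' s / v s) =ᶠ[𝓝 t] P := by
      filter_upwards [isOpen_Ioo.mem_nhds ht] with s hs
      simp only [P, hgeq hs]
      ring
    refine ((hasDerivAt_picone (hdu t) (hddu t) (hv t ht) (hv' t ht)
      (hv0 t ht)).congr_of_eventuallyEq hPeq.symm).congr_deriv ?_
    rw [hgeq ht, eq_neg_of_add_eq_zero_left (hode t ht)]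
    field_simp [hv0 t ht]
    ring
  have hint₁ : IntegrableOn (fun t => (deriv u t - g t) ^ 2) (Icc a b) :=
    ((hu1.continuous.continuousOn.sub hg).pow 2).integrableOn_compact isCompact_Icc
  have hint₂ := integrableOn_const_sub_mul_sq k hq hu.continuous.continuousOn
  have hFTC := intervalIntegral.integral_eq_sub_of_hasDeriv_right_of_le hab hP
    (fun t ht => (hPderiv t ht).hasDerivWithinAt)
    ((intervalIntegrable_iff_integrableOn_Icc_of_le hab).mpr (hint₁.add hint₂))
  rw [← integral_add hint₁ hint₂, integral_Icc_eq_integral_Ioc,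
    ← intervalIntegral.integral_of_le hab, hFTC]
  simp [P, hua, hub]

theorem eqOn_Ioo_of_integral_sq_sub_eq_zero {f g : ℝ → ℝ} {a b : ℝ}
    (hf : ContinuousOn f (Icc a b)) (hg : ContinuousOn g (Icc a b))
    (h : ∫ t in Icc a b, (f t - g t) ^ 2 = 0) : EqOn f g (Ioo a b) := by
  have hsq : (fun t => (f t - g t) ^ 2) =ᵐ[volume.restrict (Icc a b)] 0 :=
    (integral_eq_zero_iff_of_nonneg (fun t => sq_nonneg _)
      (((hf.sub hg).pow 2).integrableOn_compact isCompact_Icc)).mp h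
  rw [← Measure.restrict_congr_set Ioo_ae_eq_Icc] at hsq
  refine Measure.eqOn_open_of_ae_eq (μ := volume) ?_ isOpen_Ioo (hf.mono Ioo_subset_Icc_self)
    (hg.mono Ioo_subset_Icc_self)
  filter_upwards [hsq] with t ht
  exact sub_eq_zero.mp (pow_eq_zero_iff two_ne_zero |>.mp ht)

theorem exists_eq_const_mul_of_deriv_eq_mul_div {u v v' : ℝ → ℝ} {a b : ℝ}
    (hu : Differentiable ℝ u) (hv : ∀ t ∈ Ioo a b, HasDerivAt v (v' t) t)
    (hv0 : ∀ t ∈ Ioo a b, v t ≠ 0) (h : EqOn (deriv u) (fun t => u t * v' t / v t) (Ioo a b)) :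
    ∃ κ, ∀ t ∈ Ioo a b, u t = κ * v t := by
  have hquot : ∀ t ∈ Ioo a b, HasDerivAt (fun s => u s / v s) 0 t := by
    intro t ht
    refine ((hu t).hasDerivAt.div (hv t ht) (hv0 t ht)).congr_deriv ?_
    rw [h ht]
    field_simp [hv0 t ht]
    ring
  rcases (Ioo a b).eq_empty_or_nonempty with hempty | ⟨m, hm⟩
  · exact ⟨0, by simp [hempty]⟩
  refine ⟨u m / v m, fun t ht => ?_⟩
  rw [isOpen_Ioo.is_const_of_deriv_eq_zero isPreconnected_Ioo
      (fun s hs => (hquot s hs).differentiableAt.differentiableWithinAt)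
      (fun s hs => (hquot s hs).deriv) hm ht, div_mul_cancel₀ _ (hv0 t ht)]

theorem exists_mem_Ioo_eq_zero_of_integral_eq_zero {u q : ℝ → ℝ} {a b k : ℝ}
    (hint : IntegrableOn (fun t => (k - q t) * u t ^ 2) (Icc a b))
    (hqk : ∀ᵐ t ∂(volume.restrict (Icc a b)), q t ≤ k)
    (hpos : 0 < volume {t ∈ Icc a b | q t < k})
    (h : ∫ t in Icc a b, (k - q t) * u t ^ 2 = 0) : ∃ t ∈ Ioo a b, u t = 0 := by
  have hzero : (fun t => (k - q t) * u t ^ 2) =ᵐ[volume.restrict (Icc a b)] 0 := by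
    refine (integral_eq_zero_iff_of_nonneg_ae ?_ hint).mp h
    filter_upwards [hqk] with t ht
    exact mul_nonneg (sub_nonneg.mpr ht) (sq_nonneg _)
  have hae : ∀ᵐ t ∂(volume.restrict {t ∈ Icc a b | q t < k}),
      t ≠ a ∧ t ≠ b ∧ (k - q t) * u t ^ 2 = 0 := by
    refine ae_restrict_of_ae_restrict_of_subset (sep_subset _ _) ?_
    filter_upwards [hzero, ae_restrict_of_ae (Measure.ae_ne volume a),
      ae_restrict_of_ae (Measure.ae_ne volume b)] with t ht hta htb
    exact ⟨hta, htb, ht⟩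
  obtain ⟨t, ⟨htI, htq⟩, hta, htb, ht⟩ := Measure.exists_mem_of_measure_ne_zero_of_ae hpos.ne' hae
  refine ⟨t, ⟨htI.1.lt_of_ne' hta, htI.2.lt_of_ne htb⟩, ?_⟩
  exact pow_eq_zero_iff two_ne_zero |>.mp ((mul_eq_zero.mp ht).resolve_left (sub_pos.mpr htq).ne')

theorem hasDerivAt_sin_mul_sub (ω t₀ t : ℝ) :
    HasDerivAt (fun s => sin (ω * (s - t₀))) (ω * cos (ω * (t - t₀))) t := by
  have := ((hasDerivAt_id t).sub_const t₀).const_mul ω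
  simpa [mul_comm] using this.sin

theorem hasDerivAt_mul_cos_mul_sub (ω t₀ t : ℝ) :
    HasDerivAt (fun s => ω * cos (ω * (s - t₀))) (-ω ^ 2 * sin (ω * (t - t₀))) t := by
  have := ((((hasDerivAt_id t).sub_const t₀).const_mul ω).cos).const_mul ω
  exact this.congr_deriv (by simp only [id_eq, mul_one, neg_mul, mul_neg, neg_inj]; ring)

theorem sin_div_mul_sub_ne_zero {T t₀ t : ℝ} (hT : 0 < T) (ht : t ∈ Ioo t₀ (t₀ + T)) :
    sin (π / T * (t - t₀)) ≠ 0 := by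
  have hω : 0 < π / T := div_pos pi_pos hT
  refine (sin_pos_of_pos_of_lt_pi (mul_pos hω (by linarith [ht.1])) ?_).ne'
  calc π / T * (t - t₀) < π / T * T := mul_lt_mul_of_pos_left (by linarith [ht.2]) hω
    _ = π := div_mul_cancel₀ π hT.ne'

theorem integral_eq_zero_and_exists_eq_const_mul_sin {T t₀ : ℝ} {q u : ℝ → ℝ} (hT : 0 < T)
    (hq : IntegrableOn q (Icc t₀ (t₀ + T)))
    (hqk : ∀ᵐ t ∂(volume.restrict (Icc t₀ (t₀ + T))), q t ≤ (π / T) ^ 2)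
    (hu : ContDiff ℝ 2 u) (hode : ∀ t ∈ Ioo t₀ (t₀ + T), deriv (deriv u) t + q t * u t = 0)
    (hu₀ : u t₀ = 0) (hu₁ : u (t₀ + T) = 0) :
    ∫ t in Icc t₀ (t₀ + T), ((π / T) ^ 2 - q t) * u t ^ 2 = 0 ∧
      ∃ κ, ∀ t ∈ Ioo t₀ (t₀ + T), u t = κ * sin (π / T * (t - t₀)) := by
  set ω := π / T
  have hω : ω ≠ 0 := (div_pos pi_pos hT).ne'
  have hωT : ω * T = π := div_mul_cancel₀ π hT.ne'
  have hv0 : ∀ t ∈ Ioo t₀ (t₀ + T), sin (ω * (t - t₀)) ≠ 0 :=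
    fun t ht => sin_div_mul_sub_ne_zero hT ht
  obtain ⟨g, hg, hgeq⟩ := exists_continuousOn_Icc_eqOn_mul_div (hu.differentiable two_ne_zero)
    hu₀ hu₁ (hasDerivAt_sin_mul_sub ω t₀) (by fun_prop) (by simp) (by simp [hωT]) (by simp [hω])
    (by simp [hωT, hω]) hv0
  have hpot_nonneg : 0 ≤ ∫ t in Icc t₀ (t₀ + T), (ω ^ 2 - q t) * u t ^ 2 := by
    refine integral_nonneg_of_ae ?_
    filter_upwards [hqk] with t ht using mul_nonneg (sub_nonneg.mpr ht) (sq_nonneg _)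
  obtain ⟨hderiv, hpot⟩ := (add_eq_zero_iff_of_nonneg
    (integral_nonneg fun t => sq_nonneg _) hpot_nonneg).mp
    (integral_sq_add_integral_eq_zero (by linarith) hu hu₀ hu₁ hode hq
      (fun t _ => hasDerivAt_sin_mul_sub ω t₀ t) (fun t _ => hasDerivAt_mul_cos_mul_sub ω t₀ t)
      hv0 hg hgeq)
  refine ⟨hpot, exists_eq_const_mul_of_deriv_eq_mul_div (hu.differentiable two_ne_zero)
    (fun t _ => hasDerivAt_sin_mul_sub ω t₀ t) hv0 fun t ht => ?_⟩
  exact (eqOn_Ioo_of_integral_sq_sub_eq_zero (hu.continuous_deriv one_le_two).continuousOn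
    hg hderiv ht).trans (hgeq ht)

/-- If `q ≤ π²/T²` a.e. on `[t₀, t₀+T]`, strictly on a set of positive measure, then the
Dirichlet problem `u'' + q u = 0`, `u(t₀) = u(t₀+T) = 0` admits only the trivial solution. -/
theorem stmt18 (T : ℝ) (hT : 0 < T) (t₀ : ℝ) (q : ℝ → ℝ)
    (hint : IntegrableOn q (Icc t₀ (t₀ + T)) volume)
    (hub : ∀ᵐ t ∂(volume.restrict (Icc t₀ (t₀ + T))), q t ≤ π ^ 2 / T ^ 2)
    (hstrict : 0 < volume {t ∈ Icc t₀ (t₀ + T) | q t < π ^ 2 / T ^ 2})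
    (u : ℝ → ℝ) (hu : ContDiff ℝ 2 u)
    (hode : ∀ t ∈ Icc t₀ (t₀ + T), deriv (deriv u) t + q t * u t = 0)
    (hbc0 : u t₀ = 0) (hbcT : u (t₀ + T) = 0) :
    ∀ t ∈ Icc t₀ (t₀ + T), u t = 0 := by
  rw [← div_pow] at hub hstrict
  obtain ⟨hpot, κ, hu_eq⟩ := integral_eq_zero_and_exists_eq_const_mul_sin hT hint hub hu
    (fun t ht => hode t (Ioo_subset_Icc_self ht)) hbc0 hbcT
  obtain ⟨s, hs, hus⟩ := exists_mem_Ioo_eq_zero_of_integral_eq_zero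
    (integrableOn_const_sub_mul_sq _ hint hu.continuous.continuousOn) hub hstrict hpot
  have hκ : κ = 0 :=
    (mul_eq_zero.mp ((hu_eq s hs).symm.trans hus)).resolve_right (sin_div_mul_sub_ne_zero hT hs)
  intro t ht
  rcases eq_or_lt_of_le ht.1 with rfl | hta
  · exact hbc0
  rcases eq_or_lt_of_le ht.2 with rfl | htb
  · exact hbcT
  rw [hu_eq t ⟨hta, htb⟩, hκ, zero_mul]
end
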